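/- (Proposition 4.2) For every construction G with root graph D, every X in {W,E}, every Y in {N,S} and every edge h of D: h=YX(G) if and only if h is an X-edge of D such that every path of D that covers h is a YX-path in λ(G). -/

import Mathlib

namespace PluralCuts

/-- The two horizontal directions: west and east. -/
inductive XDir : Type
  | W
  | E
deriving DecidableEq

/-- The two vertical directions: north and south. -/
inductive YDir : Type
  | N
  | S
deriving DecidableEq

/-- The other element of `{W, E}`. -/
def XDir.other : XDir → XDir
  | .W => .E
  | .E => .W

/-- A helper choosing between two values according to an `XDir`. -/
def pick {α : Type*} (w e : α) : XDir → α
  | .W => w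
  | .E => e

/-- A digraph on (a finite set of) natural-number vertices: a finite set of
vertices together with a finite set of edges (ordered pairs). -/
structure DG : Type where
  verts : Finset ℕ
  edges : Finset (ℕ × ℕ)

namespace DG

/-- `D` is an oriented graph: edges lie between vertices, the edge relation is
irreflexive and antisymmetric, and the vertex set is nonempty. -/
def IsOriented (D : DG) : Prop :=
  (∀ e ∈ D.edges, e.1 ∈ D.verts ∧ e.2 ∈ D.verts) ∧
  (∀ e ∈ D.edges, e.1 ≠ e.2) ∧
  (∀ a b : ℕ, (a, b) ∈ D.edges → (b, a) ∉ D.edges) ∧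
  D.verts.Nonempty

/-- A `W`-vertex: no edge ends in it. -/
def isWVert (D : DG) (a : ℕ) : Prop := a ∈ D.verts ∧ ∀ b, (b, a) ∉ D.edges

/-- An `E`-vertex: no edge begins in it. -/
def isEVert (D : DG) (a : ℕ) : Prop := a ∈ D.verts ∧ ∀ b, (a, b) ∉ D.edges

/-- An inner vertex: some edge ends in it and some edge begins in it. -/
def isInner (D : DG) (a : ℕ) : Prop :=
  a ∈ D.verts ∧ (∃ b, (b, a) ∈ D.edges) ∧ (∃ b, (a, b) ∈ D.edges)

/-- A `W`-edge: an edge beginning in a `W`-vertex. -/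
def isWEdge (D : DG) (e : ℕ × ℕ) : Prop := e ∈ D.edges ∧ D.isWVert e.1

/-- An `E`-edge: an edge ending in an `E`-vertex. -/
def isEEdge (D : DG) (e : ℕ × ℕ) : Prop := e ∈ D.edges ∧ D.isEVert e.2

/-- An `X`-edge, for `X ∈ {W, E}`. -/
def isXEdge (D : DG) : XDir → (ℕ × ℕ) → Prop
  | .W => D.isWEdge
  | .E => D.isEEdge

/-- An inner edge: it begins and ends in inner vertices. -/
def isInnerEdge (D : DG) (e : ℕ × ℕ) : Prop :=
  e ∈ D.edges ∧ D.isInner e.1 ∧ D.isInner e.2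

/-- A functional `W`-edge `(a,b)`: `(a,c) ∈ D` implies `b = c`. -/
def funcWEdge (D : DG) (e : ℕ × ℕ) : Prop :=
  D.isWEdge e ∧ ∀ c, (e.1, c) ∈ D.edges → c = e.2

/-- A functional `E`-edge `(b,a)`: `(c,a) ∈ D` implies `b = c`. -/
def funcEEdge (D : DG) (e : ℕ × ℕ) : Prop :=
  D.isEEdge e ∧ ∀ c, (c, e.2) ∈ D.edges → c = e.1

/-- `D` is `W`-`E`-functional: all its `W`-edges and `E`-edges are functional. -/
def WEFunctional (D : DG) : Prop :=
  (∀ e, D.isWEdge e → D.funcWEdge e) ∧ (∀ e, D.isEEdge e → D.funcEEdge e)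

/-- Semi-adjacency: `(a,b)` or `(b,a)` is an edge. -/
def semiAdj (D : DG) (a b : ℕ) : Prop := (a, b) ∈ D.edges ∨ (b, a) ∈ D.edges

/-- A semipath: a nonempty sequence of mutually distinct vertices in which any
two consecutive vertices are semi-adjacent. -/
def IsSemipath (D : DG) (l : List ℕ) : Prop :=
  l ≠ [] ∧ (∀ a ∈ l, a ∈ D.verts) ∧ l.Nodup ∧ l.Chain' D.semiAdj

/-- A path: a nonempty sequence of mutually distinct vertices in which
`(a_i, a_{i+1})` is an edge for consecutive vertices. -/
def IsPath (D : DG) (l : List ℕ) : Prop :=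
  l ≠ [] ∧ (∀ a ∈ l, a ∈ D.verts) ∧ l.Nodup ∧
    l.Chain' (fun a b => (a, b) ∈ D.edges)

/-- A semicycle: a sequence `a_1, ..., a_n` of vertices with `n ≥ 4`,
`a_1 = a_n`, `a_1, ..., a_{n-1}` mutually distinct, and consecutive vertices
semi-adjacent. -/
def IsSemicycle (D : DG) (l : List ℕ) : Prop :=
  4 ≤ l.length ∧ (∀ a ∈ l, a ∈ D.verts) ∧ l.head? = l.getLast? ∧
  l.dropLast.Nodup ∧ l.Chain' D.semiAdj

/-- `D` is weakly connected: every two vertices are joined by a semipath. -/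
def WeaklyConnected (D : DG) : Prop :=
  ∀ a ∈ D.verts, ∀ b ∈ D.verts,
    ∃ l, D.IsSemipath l ∧ l.head? = some a ∧ l.getLast? = some b

/-- `D` is asemicyclic: it has no semicycles. -/
def Asemicyclic (D : DG) : Prop := ∀ l, ¬ D.IsSemicycle l

/-- The cut `D_W[e_W - e_E]D_E`:
`(D_W - {e_W}) ∪ (D_E - {e_E}) ∪ {(e_W.1, e_E.2)}` on the union of the vertex
sets with `e_W.2` and `e_E.1` omitted. -/
def cut (DW DE : DG) (eW eE : ℕ × ℕ) : DG where
  verts := (DW.verts ∪ DE.verts) \ {eW.2, eE.1}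
  edges := insert (eW.1, eE.2) ((DW.edges.erase eW) ∪ (DE.edges.erase eE))

end DG

/-- The type of assignments of four distinguished edges `NW, SW, NE, SE`. -/
abbrev DistE : Type := YDir → XDir → ℕ × ℕ

/-- The type of labellings assigning to (inner) vertices four edges. -/
abbrev Lab : Type := ℕ → YDir → XDir → ℕ × ℕ

/-- `⟨D, ε⟩` is a basic K-graph: `D` is an oriented graph with a single inner
vertex `b`, all edges begin or end in `b`, every other vertex is joined to `b`
by an edge, there is at least one edge ending in `b` and one beginning in `b`,
the distinguished edges `ε Y W` end in `b` and `ε Y E` begin in `b`, and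
(XYB): if there are at least two `X`-edges then `NX ≠ SX`. -/
def IsBasicK (D : DG) (ε : DistE) : Prop :=
  D.IsOriented ∧
  ∃ b ∈ D.verts,
    (∀ e ∈ D.edges, e.1 = b ∨ e.2 = b) ∧
    (∀ v ∈ D.verts, v = b ∨ (v, b) ∈ D.edges ∨ (b, v) ∈ D.edges) ∧
    (∃ a, (a, b) ∈ D.edges) ∧ (∃ c, (b, c) ∈ D.edges) ∧
    (∀ Y : YDir, ε Y XDir.W ∈ D.edges ∧ (ε Y XDir.W).2 = b ∧
      ε Y XDir.E ∈ D.edges ∧ (ε Y XDir.E).1 = b) ∧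
    (2 ≤ (D.edges.filter (fun e => e.2 = b)).card →
      ε YDir.N XDir.W ≠ ε YDir.S XDir.W) ∧
    (2 ≤ (D.edges.filter (fun e => e.1 = b)).card →
      ε YDir.N XDir.E ≠ ε YDir.S XDir.E)

/-- `⟨D, ε⟩` is a basic Q-graph: as a basic K-graph but with no requirement
(XYB) on the distinguished edges. -/
def IsBasicQ (D : DG) (ε : DistE) : Prop :=
  D.IsOriented ∧
  ∃ b ∈ D.verts,
    (∀ e ∈ D.edges, e.1 = b ∨ e.2 = b) ∧
    (∀ v ∈ D.verts, v = b ∨ (v, b) ∈ D.edges ∨ (b, v) ∈ D.edges) ∧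
    (∃ a, (a, b) ∈ D.edges) ∧ (∃ c, (b, c) ∈ D.edges) ∧
    (∀ Y : YDir, ε Y XDir.W ∈ D.edges ∧ (ε Y XDir.W).2 = b ∧
      ε Y XDir.E ∈ D.edges ∧ (ε Y XDir.E).1 = b)

/-- Finite binary trees whose nodes carry an oriented graph, four
distinguished edges, and (at internal nodes) the two cut edges. -/
inductive CTree : Type
  | leaf (D : DG) (ε : DistE)
  | node (D : DG) (ε : DistE) (eW eE : ℕ × ℕ) (l r : CTree)

namespace CTree

/-- The graph at the root of the tree. -/
def rootGraph : CTree → DG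
  | .leaf D _ => D
  | .node D _ _ _ _ _ => D

/-- The distinguished edges at the root of the tree. -/
def dist : CTree → DistE
  | .leaf _ ε => ε
  | .node _ ε _ _ _ _ => ε

/-- The list of graphs-with-distinguished-edges at the leaves of the tree
(the basic K-graphs determining the leaves of a construction). -/
def leaves : CTree → List (DG × DistE)
  | .leaf D ε => [(D, ε)]
  | .node _ _ _ _ l r => l.leaves ++ r.leaves

end CTree

/-- The tree `G_W[e_W - e_E]G_E`, whose root graph is the cut of the root
graphs and whose distinguished edges are given by (XYD). -/
def mkNode (GW GE : CTree) (eW eE : ℕ × ℕ) : CTree :=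
  .node (DG.cut GW.rootGraph GE.rootGraph eW eE)
    (fun Y X =>
      match X with
      | .W => if eE = GE.dist Y XDir.W then GW.dist Y XDir.W else GE.dist Y XDir.W
      | .E => if eW = GW.dist Y XDir.E then GE.dist Y XDir.E else GW.dist Y XDir.E)
    eW eE GW GE

/-- The inductive notion of construction (of a global K-graph). -/
inductive IsConstruction : CTree → Prop
  | leaf (D : DG) (ε : DistE) (h : IsBasicK D ε) : IsConstruction (.leaf D ε)
  | node (D : DG) (ε : DistE) (eW eE : ℕ × ℕ) (GW GE : CTree)
      (hW : IsConstruction GW) (hE : IsConstruction GE)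
      (hdisj : Disjoint GW.rootGraph.verts GE.rootGraph.verts)
      (heW : GW.rootGraph.funcEEdge eW)
      (heE : GE.rootGraph.funcWEdge eE)
      (hD : D = DG.cut GW.rootGraph GE.rootGraph eW eE)
      (hXYC : ∀ Y : YDir, eW = GW.dist Y XDir.E ∨ eE = GE.dist Y XDir.W)
      (hεW : ∀ Y : YDir, ε Y XDir.W =
        if eE = GE.dist Y XDir.W then GW.dist Y XDir.W else GE.dist Y XDir.W)
      (hεE : ∀ Y : YDir, ε Y XDir.E =
        if eW = GW.dist Y XDir.E then GE.dist Y XDir.E else GW.dist Y XDir.E) :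
      IsConstruction (.node D ε eW eE GW GE)

/-- The inductive notion of construction of a global Q-graph: as
`IsConstruction` but with basic Q-graphs at the leaves. -/
inductive IsConstructionQ : CTree → Prop
  | leaf (D : DG) (ε : DistE) (h : IsBasicQ D ε) : IsConstructionQ (.leaf D ε)
  | node (D : DG) (ε : DistE) (eW eE : ℕ × ℕ) (GW GE : CTree)
      (hW : IsConstructionQ GW) (hE : IsConstructionQ GE)
      (hdisj : Disjoint GW.rootGraph.verts GE.rootGraph.verts)
      (heW : GW.rootGraph.funcEEdge eW)
      (heE : GE.rootGraph.funcWEdge eE)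
      (hD : D = DG.cut GW.rootGraph GE.rootGraph eW eE)
      (hXYC : ∀ Y : YDir, eW = GW.dist Y XDir.E ∨ eE = GE.dist Y XDir.W)
      (hεW : ∀ Y : YDir, ε Y XDir.W =
        if eE = GE.dist Y XDir.W then GW.dist Y XDir.W else GE.dist Y XDir.W)
      (hεE : ∀ Y : YDir, ε Y XDir.E =
        if eW = GW.dist Y XDir.E then GE.dist Y XDir.E else GW.dist Y XDir.E) :
      IsConstructionQ (.node D ε eW eE GW GE)

/-- ρ-equivalence of constructions: the least equivalence relation containing
ρ1, ρ2, ρ3 and closed under congruence with respect to cuts. -/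
inductive RhoEquiv : CTree → CTree → Prop
  | rho1 (P Q R : CTree) (eW eE fW fE : ℕ × ℕ)
      (hP : IsConstruction P) (hQ : IsConstruction Q) (hR : IsConstruction R)
      (heW : P.rootGraph.isEEdge eW) (hfW : Q.rootGraph.isEEdge fW)
      (heE : Q.rootGraph.isWEdge eE) (hfE : R.rootGraph.isWEdge fE)
      (h1 : IsConstruction (mkNode (mkNode P Q eW eE) R fW fE))
      (h2 : IsConstruction (mkNode P (mkNode Q R fW fE) eW eE)) :
      RhoEquiv (mkNode (mkNode P Q eW eE) R fW fE)
               (mkNode P (mkNode Q R fW fE) eW eE)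
  | rho2 (P Q R : CTree) (eW eE fW fE : ℕ × ℕ)
      (hP : IsConstruction P) (hQ : IsConstruction Q) (hR : IsConstruction R)
      (heW : P.rootGraph.isEEdge eW) (hfW : P.rootGraph.isEEdge fW)
      (hne : eW ≠ fW)
      (heE : Q.rootGraph.isWEdge eE) (hfE : R.rootGraph.isWEdge fE)
      (h1 : IsConstruction (mkNode (mkNode P Q eW eE) R fW fE))
      (h2 : IsConstruction (mkNode (mkNode P R fW fE) Q eW eE)) :
      RhoEquiv (mkNode (mkNode P Q eW eE) R fW fE)
               (mkNode (mkNode P R fW fE) Q eW eE)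
  | rho3 (P Q R : CTree) (eW eE fW fE : ℕ × ℕ)
      (hP : IsConstruction P) (hQ : IsConstruction Q) (hR : IsConstruction R)
      (heE : P.rootGraph.isWEdge eE) (hfE : P.rootGraph.isWEdge fE)
      (hne : eE ≠ fE)
      (heW : Q.rootGraph.isEEdge eW) (hfW : R.rootGraph.isEEdge fW)
      (h1 : IsConstruction (mkNode R (mkNode Q P eW eE) fW fE))
      (h2 : IsConstruction (mkNode Q (mkNode R P fW fE) eW eE)) :
      RhoEquiv (mkNode R (mkNode Q P eW eE) fW fE)
               (mkNode Q (mkNode R P fW fE) eW eE)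
  | congr (G1 G2 H1 H2 : CTree) (eW eE : ℕ × ℕ)
      (h12 : RhoEquiv G1 G2) (h34 : RhoEquiv H1 H2)
      (hc1 : IsConstruction (mkNode G1 H1 eW eE))
      (hc2 : IsConstruction (mkNode G2 H2 eW eE)) :
      RhoEquiv (mkNode G1 H1 eW eE) (mkNode G2 H2 eW eE)
  | refl (G : CTree) (h : IsConstruction G) : RhoEquiv G G
  | symm {G H : CTree} (h : RhoEquiv G H) : RhoEquiv H G
  | trans {G H K : CTree} (h1 : RhoEquiv G H) (h2 : RhoEquiv H K) :
      RhoEquiv G K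

/-- The class `[G]`: all constructions with the same root graph as `G` whose
leaves are determined by the same basic K-graphs as those of `G`. -/
def classOf (G : CTree) : Set CTree :=
  {H | IsConstruction H ∧ H.rootGraph = G.rootGraph ∧
    ∀ p : DG × DistE, p ∈ H.leaves ↔ p ∈ G.leaves}

/-- Renaming the vertices of a digraph along a function. -/
def DG.rename (f : ℕ → ℕ) (D : DG) : DG where
  verts := D.verts.image f
  edges := D.edges.image (fun e => (f e.1, f e.2))

/-- Renaming the vertices throughout a tree. -/
def CTree.rename (f : ℕ → ℕ) : CTree → CTree
  | .leaf D ε => .leaf (DG.rename f D) (fun Y X => (f (ε Y X).1, f (ε Y X).2))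
  | .node D ε eW eE l r =>
      .node (DG.rename f D) (fun Y X => (f (ε Y X).1, f (ε Y X).2))
        (f eW.1, f eW.2) (f eE.1, f eE.2) (l.rename f) (r.rename f)

/-- σ-equivalence: `H` is obtained from `G` by a bijective renaming of
vertices that fixes the root vertices (so only secondary vertices may be
renamed). -/
def SigmaEquiv (G H : CTree) : Prop :=
  ∃ f : ℕ ≃ ℕ, (∀ v ∈ G.rootGraph.verts, f v = v) ∧ H = G.rename f

/-- The global compass graph `‖G‖`: all constructions σ-equivalent to a
construction in `[G]`. -/
def normClass (G : CTree) : Set CTree :=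
  {H | ∃ K ∈ classOf G, SigmaEquiv K H}

/-- The labelling `L` of `λ(G) = ⟨D, L⟩`, defined by induction on `G`: at a
leaf given by a basic K-graph with inner vertex `b`, `YX(b) = YX(B)`; at a
node, the value is inherited from the appropriate subtree unless it is one of
the two cut edges, in which case it is the new edge introduced by the cut. -/
def lamG : CTree → Lab
  | .leaf _ ε => fun _ => ε
  | .node _ _ eW eE l r => fun a Y X =>
      let v := if a ∈ l.rootGraph.verts then lamG l a Y X else lamG r a Y X
      if v = eW ∨ v = eE then (eW.1, eE.2) else v

/-- `L` assigns to every inner vertex `a` edges `L a Y W` ending in `a` and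
edges `L a Y E` beginning in `a`. -/
def ProperLab (D : DG) (L : Lab) : Prop :=
  ∀ a, D.isInner a → ∀ Y : YDir,
    L a Y XDir.W ∈ D.edges ∧ (L a Y XDir.W).2 = a ∧
    L a Y XDir.E ∈ D.edges ∧ (L a Y XDir.E).1 = a

/-- `⟨D, L⟩` separates `N` from `S`. -/
def SeparatesNS (D : DG) (L : Lab) : Prop :=
  ∀ a, D.isInner a →
    (2 ≤ (D.edges.filter (fun e => e.2 = a)).card →
      L a YDir.N XDir.W ≠ L a YDir.S XDir.W) ∧
    (2 ≤ (D.edges.filter (fun e => e.1 = a)).card →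
      L a YDir.N XDir.E ≠ L a YDir.S XDir.E)

/-- A list `a_1, ..., a_n` is `Y`-decent in `⟨D, L⟩`: `n = 1`, or
`YE(a_1) = (a_1, a_2)`, or `YW(a_n) = (a_{n-1}, a_n)`. -/
def Ydecent (L : Lab) (Y : YDir) (l : List ℕ) : Prop :=
  ∀ a b t, l = a :: b :: t →
    (L a Y XDir.E = (a, b) ∨
      ∃ c d t', l.reverse = d :: c :: t' ∧ L d Y XDir.W = (c, d))

/-- `⟨D, L⟩` is a local compass graph. -/
def IsLocalCompass (D : DG) (L : Lab) : Prop :=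
  D.IsOriented ∧ ProperLab D L ∧
  D.WeaklyConnected ∧ D.Asemicyclic ∧ D.WEFunctional ∧ (∃ a, D.isInner a) ∧
  SeparatesNS D L ∧
  (∀ l, D.IsPath l → Ydecent L YDir.N l ∧ Ydecent L YDir.S l)

/-- A path (list) covers an edge `g` when `g` is a pair of consecutive
vertices of the list. -/
def covers (l : List ℕ) (g : ℕ × ℕ) : Prop := g ∈ l.zip l.tail

/-- A `YX`-edge in `⟨D, L⟩`. -/
def YXedge (D : DG) (L : Lab) (Y : YDir) : XDir → (ℕ × ℕ) → Prop
  | .W, g => g ∈ D.edges ∧ (L g.2 Y XDir.W = g ∨ D.isEEdge g)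
  | .E, g => g ∈ D.edges ∧ (L g.1 Y XDir.E = g ∨ D.isWEdge g)

/-- A proper semipath: a semipath such that neither it nor its reverse is a
path. -/
def ProperSemipath (D : DG) (l : List ℕ) : Prop :=
  D.IsSemipath l ∧ ¬ D.IsPath l ∧ ¬ D.IsPath l.reverse

/-- A transversal edge `(a,b)`: there is a proper semipath beginning with
`a, b` and a proper semipath beginning with `b, a`. -/
def Transversal (D : DG) (e : ℕ × ℕ) : Prop :=
  e ∈ D.edges ∧
  (∃ t, ProperSemipath D (e.1 :: e.2 :: t)) ∧
  (∃ t, ProperSemipath D (e.2 :: e.1 :: t))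

/-- The edge of `D` that connects two semi-adjacent vertices `a` and `b`. -/
def connEdge (D : DG) (a b : ℕ) : ℕ × ℕ :=
  if (a, b) ∈ D.edges then (a, b) else (b, a)

/-- The connecting edges of a list: the edges connecting its consecutive
vertices. -/
def connEdges (D : DG) (l : List ℕ) (e : ℕ × ℕ) : Prop :=
  ∃ p ∈ l.zip l.tail, e = connEdge D p.1 p.2

/-- A bifurcation: three distinct edges with a common vertex. -/
def Bifurcation (D : DG) (e1 e2 e3 : ℕ × ℕ) : Prop :=
  e1 ∈ D.edges ∧ e2 ∈ D.edges ∧ e3 ∈ D.edges ∧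
  e1 ≠ e2 ∧ e1 ≠ e3 ∧ e2 ≠ e3 ∧
  ∃ v, (v = e1.1 ∨ v = e1.2) ∧ (v = e2.1 ∨ v = e2.2) ∧ (v = e3.1 ∨ v = e3.2)

/-- A K-graph: a weakly connected, asemicyclic, `W`-`E`-functional oriented
graph with an inner vertex in which no bifurcation is transversal. -/
def IsKGraph (D : DG) : Prop :=
  D.IsOriented ∧ D.WeaklyConnected ∧ D.Asemicyclic ∧ D.WEFunctional ∧
  (∃ a, D.isInner a) ∧
  ∀ e1 e2 e3, Bifurcation D e1 e2 e3 →
    ¬ (Transversal D e1 ∧ Transversal D e2 ∧ Transversal D e3)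

/-- A Q-graph: a weakly connected, asemicyclic, `W`-`E`-functional oriented
graph with an inner vertex. -/
def IsQGraph (D : DG) : Prop :=
  D.IsOriented ∧ D.WeaklyConnected ∧ D.Asemicyclic ∧ D.WEFunctional ∧
  ∃ a, D.isInner a

/-!
Induction on the construction, for `X = W`: reversing every edge exchanges `W` and `E` and
maps constructions to constructions, which gives `X = E`.

Whether an edge is a `YW`-edge is decided at its end vertex, so in a cut `D_W[e_W-e_E]D_E`
with `e_W = (a, b)` and `e_E = (c, d)` the edges of `D_W` and `D_E` keep their status and the
new edge `(a, d)` takes that of `e_E`. A path of the cut lies in `D_W` or in `D_E`, or it is a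
path of `D_W` ending with `e_W` glued to a path of `D_E` starting with `e_E`. So an edge `h` of
`D_W` or `D_E` is covered only by `YW`-paths of the cut iff it is so in its own side (for `h`
in `D_W`, the "if" also needs this for `e_E` in `D_E`), and with (XYD) this gives the induction
step. The one case left open is excluded by (XYC): if `e_E ≠ YW(G_E)` then `e_W = YE(G_W)`,
and gluing a path of `D_W` through `YW(G_W)` and `e_W` to a path through `e_E` that is not a
`YW`-path gives such a path through `YW(G_W)`.
-/

open List

/-! ### Edges covered by a list -/

section Covers

variable {l l₁ l₂ : List ℕ} {g g' : ℕ × ℕ} {x y : ℕ}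

@[simp] lemma not_covers_nil : ¬ covers [] g := by simp [covers]

@[simp] lemma not_covers_singleton : ¬ covers [x] g := by simp [covers]

@[simp] lemma covers_cons_cons {t : List ℕ} :
    covers (x :: y :: t) g ↔ g = (x, y) ∨ covers (y :: t) g := by
  simp [covers]

lemma covers_iff_exists_append : covers l g ↔ ∃ s t, l = s ++ g.1 :: g.2 :: t := by
  induction l with
  | nil => simp
  | cons x t ih =>
    rcases t with _ | ⟨y, t⟩
    · simp only [not_covers_singleton, false_iff, not_exists]
      intro s t h
      have := congrArg length h
      simp only [length_cons, length_nil, zero_add, length_append] at this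
      omega
    · rw [covers_cons_cons, ih]
      constructor
      · rintro (rfl | ⟨s, u, hs⟩)
        · exact ⟨[], t, rfl⟩
        · exact ⟨x :: s, u, by simp [hs]⟩
      · rintro ⟨_ | ⟨z, s⟩, u, hs⟩
        · simp only [nil_append, cons.injEq] at hs
          exact Or.inl (by rw [hs.1, hs.2.1])
        · simp only [cons_append, cons.injEq] at hs
          exact Or.inr ⟨s, u, hs.2⟩

lemma covers_mk_append : covers (l₁ ++ x :: y :: l₂) (x, y) :=
  covers_iff_exists_append.2 ⟨l₁, l₂, rfl⟩

lemma isChain_iff_covers {R : ℕ → ℕ → Prop} :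
    l.IsChain R ↔ ∀ g, covers l g → R g.1 g.2 := by
  simp only [isChain_iff_forall_rel_of_append_cons_cons, covers_iff_exists_append,
    Prod.forall, forall_exists_index]

lemma covers.mem (h : covers l g) : g.1 ∈ l ∧ g.2 ∈ l := by
  obtain ⟨s, t, rfl⟩ := covers_iff_exists_append.1 h
  simp

lemma covers.append_left (h : covers l₁ g) : covers (l₁ ++ l₂) g := by
  obtain ⟨s, t, rfl⟩ := covers_iff_exists_append.1 h
  exact covers_iff_exists_append.2 ⟨s, t ++ l₂, by simp⟩

lemma covers.append_right (h : covers l₂ g) : covers (l₁ ++ l₂) g := by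
  obtain ⟨s, t, rfl⟩ := covers_iff_exists_append.1 h
  exact covers_iff_exists_append.2 ⟨l₁ ++ s, t, by simp⟩

lemma covers_reverse_iff : covers l.reverse g.swap ↔ covers l g := by
  simp only [covers_iff_exists_append, Prod.fst_swap, Prod.snd_swap]
  constructor
  · rintro ⟨s, t, hl⟩
    exact ⟨t.reverse, s.reverse, by simpa using congrArg reverse hl⟩
  · rintro ⟨s, t, rfl⟩
    exact ⟨t.reverse, s.reverse, by simp⟩

lemma covers_append_cases (h : covers (l₁ ++ l₂) g) :
    covers l₁ g ∨ covers l₂ g ∨ (l₁.getLast? = some g.1 ∧ l₂.head? = some g.2) := by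
  induction l₁ with
  | nil => exact Or.inr (Or.inl h)
  | cons x t ih =>
    rcases t with _ | ⟨y, t⟩
    · rcases l₂ with _ | ⟨z, l₂⟩
      · exact absurd h not_covers_singleton
      · rcases covers_cons_cons.1 h with rfl | h
        · simp
        · exact Or.inr (Or.inl h)
    · rcases covers_cons_cons.1 h with rfl | h
      · exact Or.inl (covers_cons_cons.2 (Or.inl rfl))
      · rcases ih h with h | h | h
        · exact Or.inl (covers_cons_cons.2 (Or.inr h))
        · exact Or.inr (Or.inl h)
        · exact Or.inr (Or.inr (by simpa using h))

lemma covers.of_append_left (h : covers (l₁ ++ l₂) g) (hg : g.2 ∉ l₂) : covers l₁ g := by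
  rcases covers_append_cases h with h | h | h
  · exact h
  · exact absurd h.mem.2 hg
  · exact absurd (mem_of_mem_head? h.2) hg

lemma covers.of_append_right (h : covers (l₁ ++ l₂) g) (hg : g.1 ∉ l₁) : covers l₂ g := by
  rw [← covers_reverse_iff, reverse_append] at h
  rw [← covers_reverse_iff]
  exact h.of_append_left (by simpa using hg)

lemma covers.eq_of_snd_eq (h : covers l g) (h' : covers l g') (hl : l.Nodup) (hg : g.2 = g'.2) :
    g = g' := by
  have hnd : (map Prod.snd (l.zip l.tail)).Nodup := by
    rw [map_snd_zip (by simp)]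
    exact hl.sublist (tail_sublist l)
  exact inj_on_of_nodup_map hnd h h' hg

end Covers

section Chains

variable {α : Type*} {R : α → α → Prop} {l : List α} {v : α}

lemma _root_.List.IsChain.eq_cons_of_forall_not_rel (hl : l.IsChain R) (hv : v ∈ l)
    (h : ∀ u, ¬ R u v) : ∃ t, l = v :: t := by
  obtain ⟨s, t, rfl⟩ := append_of_mem hv
  rcases eq_nil_or_concat s with rfl | ⟨s, u, rfl⟩
  · exact ⟨t, rfl⟩
  · rw [concat_eq_append, append_assoc, singleton_append, isChain_append_cons_cons] at hl
    exact absurd hl.2.1 (h u)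

lemma _root_.List.IsChain.eq_append_of_forall_not_rel (hl : l.IsChain R) (hv : v ∈ l)
    (h : ∀ w, ¬ R v w) : ∃ s, l = s ++ [v] := by
  obtain ⟨s, t, rfl⟩ := append_of_mem hv
  rcases t with _ | ⟨w, t⟩
  · exact ⟨s, rfl⟩
  · exact absurd (isChain_append_cons_cons.1 hl).2.1 (h w)

end Chains

/-! ### Paths in a digraph -/

namespace DG

variable {D : DG} {l q r : List ℕ} {g e : ℕ × ℕ} {b u v : ℕ}

lemma isWVert_iff : D.isWVert v ↔ v ∈ D.verts ∧ ¬ ∃ u, (u, v) ∈ D.edges := by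
  simp [isWVert]

lemma isEVert_iff : D.isEVert v ↔ v ∈ D.verts ∧ ¬ ∃ w, (v, w) ∈ D.edges := by
  simp [isEVert]

lemma isWVert.snd_ne (hv : D.isWVert v) (hg : g ∈ D.edges) : g.2 ≠ v := by
  rintro rfl
  exact hv.2 g.1 hg

lemma isEVert.fst_ne (hv : D.isEVert v) (hg : g ∈ D.edges) : g.1 ≠ v := by
  rintro rfl
  exact hv.2 g.2 hg

lemma funcEEdge.eq_of_snd_eq (he : D.funcEEdge e) (hg : g ∈ D.edges) (h2 : g.2 = e.2) :
    g = e :=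
  Prod.ext (he.2 g.1 (h2 ▸ hg)) h2

lemma funcWEdge.eq_of_fst_eq (he : D.funcWEdge e) (hg : g ∈ D.edges) (h1 : g.1 = e.1) :
    g = e :=
  Prod.ext h1 (he.2 g.2 (h1 ▸ hg))

lemma IsOriented.isWEdge_of_snd_eq (ho : D.IsOriented)
    (hstar : ∀ e ∈ D.edges, e.1 = b ∨ e.2 = b) (hg : g ∈ D.edges) (h2 : g.2 = b) :
    D.isWEdge g := by
  refine ⟨hg, (ho.1 g hg).1, fun u hu => ?_⟩
  rcases hstar _ hu with h | h <;> simp only at h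
  · subst h
    exact ho.2.2.1 g.1 g.2 hg (h2 ▸ hu)
  · exact ho.2.1 g hg (h.trans h2.symm)

lemma IsOriented.isEEdge_of_fst_eq (ho : D.IsOriented)
    (hstar : ∀ e ∈ D.edges, e.1 = b ∨ e.2 = b) (hg : g ∈ D.edges) (h1 : g.1 = b) :
    D.isEEdge g := by
  refine ⟨hg, (ho.1 g hg).2, fun w hw => ?_⟩
  rcases hstar _ hw with h | h <;> simp only at h
  · exact ho.2.1 g hg (h1.trans h.symm)
  · subst h
    exact ho.2.2.1 g.1 g.2 hg (h1 ▸ hw)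

lemma IsPath.isChain (hl : D.IsPath l) : l.IsChain fun a b => (a, b) ∈ D.edges := hl.2.2.2

lemma IsPath.mem_edges (hl : D.IsPath l) (hg : covers l g) : g ∈ D.edges :=
  isChain_iff_covers.1 hl.isChain g hg

lemma IsPath.infix {l' : List ℕ} (hl : D.IsPath l) (h : l' <:+: l) (hne : l' ≠ []) :
    D.IsPath l' :=
  ⟨hne, fun a ha => hl.2.1 a (h.subset ha), hl.2.2.1.sublist h.sublist, hl.isChain.infix h⟩

lemma IsPath.append {l₁ l₂ : List ℕ} (h₁ : D.IsPath l₁) (h₂ : D.IsPath l₂)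
    (hd : ∀ a ∈ l₁, a ∉ l₂)
    (he : ∀ x ∈ l₁.getLast?, ∀ y ∈ l₂.head?, (x, y) ∈ D.edges) :
    D.IsPath (l₁ ++ l₂) := by
  refine ⟨by simp [h₁.1], ?_, ?_, h₁.isChain.append h₂.isChain he⟩
  · simpa [or_imp, forall_and] using ⟨h₁.2.1, h₂.2.1⟩
  · exact nodup_append.2 ⟨h₁.2.2.1, h₂.2.2.1, fun a ha b hb hab => hd a ha (hab ▸ hb)⟩

lemma isPath_singleton (hv : v ∈ D.verts) : D.IsPath [v] :=
  ⟨by simp, by simpa using hv, nodup_singleton v, isChain_singleton v⟩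

lemma IsPath.append_singleton (hl : D.IsPath (q ++ [u])) (hv : v ∈ D.verts)
    (hvl : v ∉ q ++ [u]) (he : (u, v) ∈ D.edges) : D.IsPath (q ++ [u, v]) := by
  simpa using hl.append (isPath_singleton hv) (fun a ha h => hvl (by simp_all)) (by simpa using he)

lemma IsPath.cons_of_mem_edges (hl : D.IsPath (u :: r)) (hv : v ∈ D.verts)
    (hvl : v ∉ u :: r) (he : (v, u) ∈ D.edges) : D.IsPath (v :: u :: r) :=
  (isPath_singleton hv).append hl (by simpa using hvl) (by simpa using he)

lemma IsOriented.isPath_pair (ho : D.IsOriented) (hg : g ∈ D.edges) : D.IsPath [g.1, g.2] :=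
  ⟨by simp, by simpa using ho.1 g hg, by simpa using ho.2.1 g hg, isChain_pair.2 hg⟩

lemma IsPath.eq_cons_of_isWVert (hl : D.IsPath l) (hv : v ∈ l) (hW : D.isWVert v) :
    ∃ t, l = v :: t :=
  hl.isChain.eq_cons_of_forall_not_rel hv hW.2

lemma IsPath.eq_append_of_isEVert (hl : D.IsPath l) (hv : v ∈ l) (hE : D.isEVert v) :
    ∃ s, l = s ++ [v] :=
  hl.isChain.eq_append_of_forall_not_rel hv hE.2

lemma IsPath.eq_of_isWVert (hl : D.IsPath l) (hu : u ∈ l) (hv : v ∈ l)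
    (hWu : D.isWVert u) (hWv : D.isWVert v) : u = v := by
  obtain ⟨s, rfl⟩ := hl.eq_cons_of_isWVert hu hWu
  obtain ⟨t, ht⟩ := hl.eq_cons_of_isWVert hv hWv
  exact (cons.inj ht).1

lemma IsPath.eq_of_isEVert (hl : D.IsPath l) (hu : u ∈ l) (hv : v ∈ l)
    (hEu : D.isEVert u) (hEv : D.isEVert v) : u = v := by
  obtain ⟨s, rfl⟩ := hl.eq_append_of_isEVert hu hEu
  obtain ⟨t, ht⟩ := hl.eq_append_of_isEVert hv hEv
  simpa using (append_inj ht (by simpa using congrArg length ht)).2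

lemma IsPath.eq_append_of_funcEEdge (hl : D.IsPath l) (he : D.funcEEdge e) (hb : e.2 ∈ l)
    (hg : covers l g) : ∃ q, l = q ++ [e.1, e.2] := by
  obtain ⟨s, rfl⟩ := hl.eq_append_of_isEVert hb he.1.2
  rcases eq_nil_or_concat s with rfl | ⟨q, x, rfl⟩
  · exact absurd hg not_covers_singleton
  · rw [concat_eq_append, append_assoc, singleton_append] at hl ⊢
    have hx : (x, e.2) ∈ D.edges := hl.mem_edges covers_mk_append
    exact ⟨q, by rw [he.2 x hx]⟩

lemma IsPath.eq_cons_of_funcWEdge (hl : D.IsPath l) (he : D.funcWEdge e) (hc : e.1 ∈ l)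
    (hg : covers l g) : ∃ r, l = e.1 :: e.2 :: r := by
  obtain ⟨_ | ⟨y, r⟩, rfl⟩ := hl.eq_cons_of_isWVert hc he.1.2
  · exact absurd hg not_covers_singleton
  · have hy : (e.1, y) ∈ D.edges := hl.mem_edges (covers_cons_cons.2 (Or.inl rfl))
    exact ⟨r, by rw [he.2 y hy]⟩

def reverse (D : DG) : DG where
  verts := D.verts
  edges := D.edges.map (Equiv.prodComm ℕ ℕ).toEmbedding

@[simp] lemma reverse_verts : D.reverse.verts = D.verts := rfl

@[simp] lemma mem_reverse_edges : g ∈ D.reverse.edges ↔ g.swap ∈ D.edges := by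
  simp [reverse, Finset.mem_map_equiv]

@[simp] lemma isWVert_reverse : D.reverse.isWVert v ↔ D.isEVert v := by
  simp [isWVert, isEVert]

@[simp] lemma isEVert_reverse : D.reverse.isEVert v ↔ D.isWVert v := by
  simp [isWVert, isEVert]

@[simp] lemma isWEdge_reverse : D.reverse.isWEdge g ↔ D.isEEdge g.swap := by
  simp [isWEdge, isEEdge]

@[simp] lemma isEEdge_reverse : D.reverse.isEEdge g ↔ D.isWEdge g.swap := by
  simp [isWEdge, isEEdge]

@[simp] lemma funcWEdge_reverse : D.reverse.funcWEdge g ↔ D.funcEEdge g.swap := by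
  simp [funcWEdge, funcEEdge]

@[simp] lemma funcEEdge_reverse : D.reverse.funcEEdge g ↔ D.funcWEdge g.swap := by
  simp [funcWEdge, funcEEdge]

lemma IsOriented.reverse (ho : D.IsOriented) : D.reverse.IsOriented :=
  ⟨fun g hg => (ho.1 _ (mem_reverse_edges.1 hg)).symm,
    fun g hg => (ho.2.1 _ (mem_reverse_edges.1 hg)).symm,
    fun a b hab hba => ho.2.2.1 b a (by simpa using hab) (by simpa using hba), ho.2.2.2⟩

lemma isPath_reverse : D.reverse.IsPath l ↔ D.IsPath l.reverse := by
  have hchain : (l.reverse.IsChain fun a b => (a, b) ∈ D.edges) ↔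
      l.IsChain fun a b => (a, b) ∈ D.reverse.edges := by
    simp [isChain_reverse]
  exact ⟨fun h => ⟨by simpa using h.1, by simpa using h.2.1, nodup_reverse.2 h.2.2.1,
      hchain.2 h.isChain⟩,
    fun h => ⟨by simpa using h.1, by simpa using h.2.1, nodup_reverse.1 h.2.2.1,
      hchain.1 h.isChain⟩⟩

end DG

def IsYXPath (D : DG) (L : Lab) (Y : YDir) (X : XDir) (l : List ℕ) : Prop :=
  ∀ g, covers l g → YXedge D L Y X g

def CoveringPathsAreYX (D : DG) (L : Lab) (Y : YDir) (X : XDir) (h : ℕ × ℕ) : Prop :=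
  ∀ l, D.IsPath l → covers l h → IsYXPath D L Y X l

lemma isYXPath_iff_isChain {D : DG} {L : Lab} {Y : YDir} {X : XDir} {l : List ℕ} :
    IsYXPath D L Y X l ↔ l.IsChain fun a b => YXedge D L Y X (a, b) :=
  (isChain_iff_covers (R := fun a b => YXedge D L Y X (a, b))).symm

lemma yxedge_W_iff {D : DG} {L : Lab} {Y : YDir} {g : ℕ × ℕ} (hg : g ∈ D.edges)
    (hv : g.2 ∈ D.verts) :
    YXedge D L Y .W g ↔ (D.isInner g.2 → L g.2 Y .W = g) := by
  have hin : ∃ u, (u, g.2) ∈ D.edges := ⟨g.1, hg⟩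
  simp only [YXedge, DG.isEEdge, DG.isEVert, DG.isInner, hg, hv, hin, true_and]
  constructor
  · rintro (h | h) ⟨w, hw⟩
    exacts [h, absurd hw (h w)]
  · intro h
    by_cases hout : ∃ w, (g.2, w) ∈ D.edges
    exacts [Or.inl (h hout), Or.inr (by simpa using hout)]

/-! ### Cuts -/

namespace DG

variable {DW DE : DG} {eW eE g : ℕ × ℕ} {v : ℕ}

lemma mem_cut_edges : g ∈ (DW.cut DE eW eE).edges ↔
    g = (eW.1, eE.2) ∨ (g ∈ DW.edges ∧ g ≠ eW) ∨ (g ∈ DE.edges ∧ g ≠ eE) := by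
  simp only [cut, Finset.mem_insert, Finset.mem_union, Finset.mem_erase]
  tauto

lemma mem_cut_verts : v ∈ (DW.cut DE eW eE).verts ↔
    (v ∈ DW.verts ∨ v ∈ DE.verts) ∧ v ≠ eW.2 ∧ v ≠ eE.1 := by
  simp only [cut, Finset.mem_sdiff, Finset.mem_union, Finset.mem_insert, Finset.mem_singleton]
  tauto

lemma mem_cut_edges_of_mem_W (hg : g ∈ DW.edges) (hne : g ≠ eW) :
    g ∈ (DW.cut DE eW eE).edges :=
  mem_cut_edges.2 (Or.inr (Or.inl ⟨hg, hne⟩))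

lemma mem_cut_edges_of_mem_E (hg : g ∈ DE.edges) (hne : g ≠ eE) :
    g ∈ (DW.cut DE eW eE).edges :=
  mem_cut_edges.2 (Or.inr (Or.inr ⟨hg, hne⟩))

lemma new_mem_cut_edges : (eW.1, eE.2) ∈ (DW.cut DE eW eE).edges :=
  mem_cut_edges.2 (Or.inl rfl)

lemma cut_reverse {DW DE : DG} {eW eE : ℕ × ℕ} :
    (DW.cut DE eW eE).reverse = DE.reverse.cut DW.reverse eE.swap eW.swap := by
  simp only [reverse, cut, mk.injEq]
  constructor
  · ext v; simp; tauto
  · ext g; simp [Prod.swap_eq_iff_eq_swap]; tauto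

end DG

structure CutSetting (DW DE : DG) (eW eE : ℕ × ℕ) : Prop where
  orientedW : DW.IsOriented
  orientedE : DE.IsOriented
  disjoint : Disjoint DW.verts DE.verts
  funcEEdge_eW : DW.funcEEdge eW
  funcWEdge_eE : DE.funcWEdge eE

namespace CutSetting

variable {DW DE : DG} {eW eE g : ℕ × ℕ} {v : ℕ} {l q r : List ℕ}
  (hc : CutSetting DW DE eW eE)

include hc

lemma fst_eW_mem : eW.1 ∈ DW.verts := (hc.orientedW.1 _ hc.funcEEdge_eW.1.1).1
lemma snd_eW_mem : eW.2 ∈ DW.verts := (hc.orientedW.1 _ hc.funcEEdge_eW.1.1).2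
lemma fst_eE_mem : eE.1 ∈ DE.verts := (hc.orientedE.1 _ hc.funcWEdge_eE.1.1).1
lemma snd_eE_mem : eE.2 ∈ DE.verts := (hc.orientedE.1 _ hc.funcWEdge_eE.1.1).2

lemma fst_ne_snd_eW : eW.1 ≠ eW.2 := hc.orientedW.2.1 _ hc.funcEEdge_eW.1.1

lemma notMem_E_of_mem_W (hv : v ∈ DW.verts) : v ∉ DE.verts :=
  Finset.disjoint_left.1 hc.disjoint hv

lemma notMem_W_of_mem_E (hv : v ∈ DE.verts) : v ∉ DW.verts :=
  Finset.disjoint_right.1 hc.disjoint hv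

lemma mem_cut_verts_iff_W (hv : v ∈ DW.verts) : v ∈ (DW.cut DE eW eE).verts ↔ v ≠ eW.2 := by
  have : v ≠ eE.1 := fun h => hc.notMem_E_of_mem_W hv (h ▸ hc.fst_eE_mem)
  simp [DG.mem_cut_verts, hv, this]

lemma mem_cut_verts_iff_E (hv : v ∈ DE.verts) : v ∈ (DW.cut DE eW eE).verts ↔ v ≠ eE.1 := by
  have : v ≠ eW.2 := fun h => hc.notMem_W_of_mem_E hv (h ▸ hc.snd_eW_mem)
  simp [DG.mem_cut_verts, hv, this]

lemma snd_ne_of_mem_W (hg : g ∈ DW.edges) (hne : g ≠ eW) : g.2 ≠ eW.2 :=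
  fun h => hne (hc.funcEEdge_eW.eq_of_snd_eq hg h)

lemma fst_ne_of_mem_E (hg : g ∈ DE.edges) (hne : g ≠ eE) : g.1 ≠ eE.1 :=
  fun h => hne (hc.funcWEdge_eE.eq_of_fst_eq hg h)

lemma mem_edges_W_of_snd_mem (hg : g ∈ (DW.cut DE eW eE).edges) (hv : g.2 ∈ DW.verts) :
    g ∈ DW.edges ∧ g ≠ eW := by
  rcases DG.mem_cut_edges.1 hg with rfl | h | h
  · exact absurd hc.snd_eE_mem (hc.notMem_E_of_mem_W hv)
  · exact h
  · exact absurd (hc.orientedE.1 _ h.1).2 (hc.notMem_E_of_mem_W hv)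

lemma mem_edges_E_of_fst_mem (hg : g ∈ (DW.cut DE eW eE).edges) (hv : g.1 ∈ DE.verts) :
    g ∈ DE.edges ∧ g ≠ eE := by
  rcases DG.mem_cut_edges.1 hg with rfl | h | h
  · exact absurd hc.fst_eW_mem (hc.notMem_W_of_mem_E hv)
  · exact absurd (hc.orientedW.1 _ h.1).1 (hc.notMem_W_of_mem_E hv)
  · exact h

lemma mem_edges_W_of_fst_mem (hg : g ∈ (DW.cut DE eW eE).edges) (hv : g.1 ∈ DW.verts)
    (hnew : g ≠ (eW.1, eE.2)) : g ∈ DW.edges ∧ g ≠ eW := by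
  rcases DG.mem_cut_edges.1 hg with h | h | h
  · exact absurd h hnew
  · exact h
  · exact absurd (hc.orientedE.1 _ h.1).1 (hc.notMem_E_of_mem_W hv)

lemma mem_edges_E_of_snd_mem (hg : g ∈ (DW.cut DE eW eE).edges) (hv : g.2 ∈ DE.verts)
    (hnew : g ≠ (eW.1, eE.2)) : g ∈ DE.edges ∧ g ≠ eE := by
  rcases DG.mem_cut_edges.1 hg with h | h | h
  · exact absurd h hnew
  · exact absurd (hc.orientedW.1 _ h.1).2 (hc.notMem_W_of_mem_E hv)
  · exact h

lemma mem_cut_verts_of_mem_cut_edges (hg : g ∈ (DW.cut DE eW eE).edges) :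
    g.1 ∈ (DW.cut DE eW eE).verts ∧ g.2 ∈ (DW.cut DE eW eE).verts := by
  rcases DG.mem_cut_edges.1 hg with rfl | ⟨hg, hne⟩ | ⟨hg, hne⟩
  · exact ⟨(hc.mem_cut_verts_iff_W hc.fst_eW_mem).2 (hc.orientedW.2.1 _ hc.funcEEdge_eW.1.1),
      (hc.mem_cut_verts_iff_E hc.snd_eE_mem).2 (hc.orientedE.2.1 _ hc.funcWEdge_eE.1.1).symm⟩
  · exact ⟨(hc.mem_cut_verts_iff_W (hc.orientedW.1 g hg).1).2 (hc.funcEEdge_eW.1.2.fst_ne hg),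
      (hc.mem_cut_verts_iff_W (hc.orientedW.1 g hg).2).2 (hc.snd_ne_of_mem_W hg hne)⟩
  · exact ⟨(hc.mem_cut_verts_iff_E (hc.orientedE.1 g hg).1).2 (hc.fst_ne_of_mem_E hg hne),
      (hc.mem_cut_verts_iff_E (hc.orientedE.1 g hg).2).2 (hc.funcWEdge_eE.1.2.snd_ne hg)⟩

lemma isOriented_cut : (DW.cut DE eW eE).IsOriented := by
  refine ⟨fun g hg => hc.mem_cut_verts_of_mem_cut_edges hg, fun g hg => ?_,
    fun x y hxy hyx => ?_, ⟨eW.1, (hc.mem_cut_verts_of_mem_cut_edges DG.new_mem_cut_edges).1⟩⟩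
  · rcases DG.mem_cut_edges.1 hg with rfl | ⟨hg, -⟩ | ⟨hg, -⟩
    · exact fun h => hc.notMem_E_of_mem_W hc.fst_eW_mem (h ▸ hc.snd_eE_mem)
    · exact hc.orientedW.2.1 g hg
    · exact hc.orientedE.2.1 g hg
  · rcases (DG.mem_cut_verts.1 (hc.mem_cut_verts_of_mem_cut_edges hxy).1).1 with hx | hx
    · have hyx' := (hc.mem_edges_W_of_snd_mem hyx hx).1
      exact hc.orientedW.2.2.1 x y
        (hc.mem_edges_W_of_snd_mem hxy (hc.orientedW.1 _ hyx').1).1 hyx'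
    · have hxy' := (hc.mem_edges_E_of_fst_mem hxy hx).1
      exact hc.orientedE.2.2.1 x y hxy'
        (hc.mem_edges_E_of_fst_mem hyx (hc.orientedE.1 _ hxy').2).1

lemma exists_in_cut_iff_W (hv : v ∈ DW.verts) (hb : v ≠ eW.2) :
    (∃ u, (u, v) ∈ (DW.cut DE eW eE).edges) ↔ ∃ u, (u, v) ∈ DW.edges := by
  refine ⟨fun ⟨u, hu⟩ => ⟨u, (hc.mem_edges_W_of_snd_mem hu hv).1⟩,
    fun ⟨u, hu⟩ => ⟨u, ?_⟩⟩
  exact DG.mem_cut_edges_of_mem_W hu (fun h => hb (by rw [← h]))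

lemma exists_out_cut_iff_W (hv : v ∈ DW.verts) :
    (∃ w, (v, w) ∈ (DW.cut DE eW eE).edges) ↔ ∃ w, (v, w) ∈ DW.edges := by
  by_cases ha : v = eW.1
  · subst ha
    exact iff_of_true ⟨_, DG.new_mem_cut_edges⟩ ⟨_, hc.funcEEdge_eW.1.1⟩
  refine ⟨fun ⟨w, hw⟩ => ⟨w, (hc.mem_edges_W_of_fst_mem hw hv ?_).1⟩,
    fun ⟨w, hw⟩ => ⟨w, ?_⟩⟩
  · exact fun h => ha (Prod.ext_iff.1 h).1
  · exact DG.mem_cut_edges_of_mem_W hw (fun h => ha (by rw [← h]))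

lemma exists_in_cut_iff_E (hv : v ∈ DE.verts) :
    (∃ u, (u, v) ∈ (DW.cut DE eW eE).edges) ↔ ∃ u, (u, v) ∈ DE.edges := by
  by_cases hd : v = eE.2
  · subst hd
    exact iff_of_true ⟨_, DG.new_mem_cut_edges⟩ ⟨_, hc.funcWEdge_eE.1.1⟩
  refine ⟨fun ⟨u, hu⟩ => ⟨u, (hc.mem_edges_E_of_snd_mem hu hv ?_).1⟩,
    fun ⟨u, hu⟩ => ⟨u, ?_⟩⟩
  · exact fun h => hd (Prod.ext_iff.1 h).2
  · exact DG.mem_cut_edges_of_mem_E hu (fun h => hd (by rw [← h]))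

lemma exists_out_cut_iff_E (hv : v ∈ DE.verts) (hc' : v ≠ eE.1) :
    (∃ w, (v, w) ∈ (DW.cut DE eW eE).edges) ↔ ∃ w, (v, w) ∈ DE.edges := by
  refine ⟨fun ⟨w, hw⟩ => ⟨w, (hc.mem_edges_E_of_fst_mem hw hv).1⟩,
    fun ⟨w, hw⟩ => ⟨w, ?_⟩⟩
  exact DG.mem_cut_edges_of_mem_E hw (fun h => hc' (by rw [← h]))

lemma isWVert_cut_iff_W (hv : v ∈ DW.verts) (hb : v ≠ eW.2) :
    (DW.cut DE eW eE).isWVert v ↔ DW.isWVert v := by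
  rw [DG.isWVert_iff, DG.isWVert_iff, hc.mem_cut_verts_iff_W hv, hc.exists_in_cut_iff_W hv hb]
  simp [hv, hb]

lemma isEVert_cut_iff_W (hv : v ∈ DW.verts) (hb : v ≠ eW.2) :
    (DW.cut DE eW eE).isEVert v ↔ DW.isEVert v := by
  rw [DG.isEVert_iff, DG.isEVert_iff, hc.mem_cut_verts_iff_W hv, hc.exists_out_cut_iff_W hv]
  simp [hv, hb]

lemma isInner_cut_iff_W (hv : v ∈ DW.verts) (hb : v ≠ eW.2) :
    (DW.cut DE eW eE).isInner v ↔ DW.isInner v := by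
  rw [DG.isInner, DG.isInner, hc.mem_cut_verts_iff_W hv, hc.exists_in_cut_iff_W hv hb,
    hc.exists_out_cut_iff_W hv]
  simp [hv, hb]

lemma isWVert_cut_iff_E (hv : v ∈ DE.verts) (hc' : v ≠ eE.1) :
    (DW.cut DE eW eE).isWVert v ↔ DE.isWVert v := by
  rw [DG.isWVert_iff, DG.isWVert_iff, hc.mem_cut_verts_iff_E hv, hc.exists_in_cut_iff_E hv]
  simp [hv, hc']

lemma isEVert_cut_iff_E (hv : v ∈ DE.verts) (hc' : v ≠ eE.1) :
    (DW.cut DE eW eE).isEVert v ↔ DE.isEVert v := by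
  rw [DG.isEVert_iff, DG.isEVert_iff, hc.mem_cut_verts_iff_E hv, hc.exists_out_cut_iff_E hv hc']
  simp [hv, hc']

lemma isInner_cut_iff_E (hv : v ∈ DE.verts) (hc' : v ≠ eE.1) :
    (DW.cut DE eW eE).isInner v ↔ DE.isInner v := by
  rw [DG.isInner, DG.isInner, hc.mem_cut_verts_iff_E hv, hc.exists_in_cut_iff_E hv,
    hc.exists_out_cut_iff_E hv hc']
  simp [hv, hc']

lemma isWEdge_cut_iff_W (hg : g ∈ DW.edges) (hne : g ≠ eW) :
    (DW.cut DE eW eE).isWEdge g ↔ DW.isWEdge g := by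
  have hb : g.1 ≠ eW.2 := hc.funcEEdge_eW.1.2.fst_ne hg
  simp only [DG.isWEdge, DG.mem_cut_edges_of_mem_W hg hne, hg, true_and]
  exact hc.isWVert_cut_iff_W (hc.orientedW.1 g hg).1 hb

lemma isWEdge_cut_iff_E (hg : g ∈ DE.edges) (hne : g ≠ eE) :
    (DW.cut DE eW eE).isWEdge g ↔ DE.isWEdge g := by
  simp only [DG.isWEdge, DG.mem_cut_edges_of_mem_E hg hne, hg, true_and]
  exact hc.isWVert_cut_iff_E (hc.orientedE.1 g hg).1 (hc.fst_ne_of_mem_E hg hne)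

lemma isEEdge_cut_iff_W (hg : g ∈ DW.edges) (hne : g ≠ eW) :
    (DW.cut DE eW eE).isEEdge g ↔ DW.isEEdge g := by
  simp only [DG.isEEdge, DG.mem_cut_edges_of_mem_W hg hne, hg, true_and]
  exact hc.isEVert_cut_iff_W (hc.orientedW.1 g hg).2 (hc.snd_ne_of_mem_W hg hne)

lemma isEEdge_cut_iff_E (hg : g ∈ DE.edges) (hne : g ≠ eE) :
    (DW.cut DE eW eE).isEEdge g ↔ DE.isEEdge g := by
  have hc' : g.2 ≠ eE.1 := hc.funcWEdge_eE.1.2.snd_ne hg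
  simp only [DG.isEEdge, DG.mem_cut_edges_of_mem_E hg hne, hg, true_and]
  exact hc.isEVert_cut_iff_E (hc.orientedE.1 g hg).2 hc'

lemma isPath_cut_iff_W (hl : ∀ v ∈ l, v ∈ DW.verts) :
    (DW.cut DE eW eE).IsPath l ↔ DW.IsPath l ∧ eW.2 ∉ l := by
  constructor
  · intro h
    refine ⟨⟨h.1, hl, h.2.2.1, h.isChain.imp_of_mem_imp fun x y _ hy hxy =>
      (hc.mem_edges_W_of_snd_mem hxy (hl y hy)).1⟩, fun hb => ?_⟩
    exact (hc.mem_cut_verts_iff_W hc.snd_eW_mem).1 (h.2.1 _ hb) rfl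
  · rintro ⟨h, hb⟩
    refine ⟨h.1, fun v hv => (hc.mem_cut_verts_iff_W (hl v hv)).2 fun e => hb (e ▸ hv),
      h.2.2.1, h.isChain.imp_of_mem_imp fun _ _ _ hy hxy =>
        DG.mem_cut_edges_of_mem_W hxy fun e => hb ?_⟩
    rwa [← e]

lemma isPath_cut_iff_E (hl : ∀ v ∈ l, v ∈ DE.verts) :
    (DW.cut DE eW eE).IsPath l ↔ DE.IsPath l ∧ eE.1 ∉ l := by
  constructor
  · intro h
    refine ⟨⟨h.1, hl, h.2.2.1, h.isChain.imp_of_mem_imp fun x y hx _ hxy =>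
      (hc.mem_edges_E_of_fst_mem hxy (hl x hx)).1⟩, fun hc' => ?_⟩
    exact (hc.mem_cut_verts_iff_E hc.fst_eE_mem).1 (h.2.1 _ hc') rfl
  · rintro ⟨h, hc'⟩
    refine ⟨h.1, fun v hv => (hc.mem_cut_verts_iff_E (hl v hv)).2 fun e => hc' (e ▸ hv),
      h.2.2.1, h.isChain.imp_of_mem_imp fun _ _ hx _ hxy =>
        DG.mem_cut_edges_of_mem_E hxy fun e => hc' ?_⟩
    rwa [← e]

lemma forall_mem_E_of_isPath_cut {x : ℕ} {t : List ℕ}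
    (hl : (DW.cut DE eW eE).IsPath (x :: t)) (hx : x ∈ DE.verts) :
    ∀ v ∈ x :: t, v ∈ DE.verts :=
  hl.isChain.induction _ _
    (fun _ _ hab ha => (hc.orientedE.1 _ (hc.mem_edges_E_of_fst_mem hab ha).1).2) (fun _ => hx)

lemma forall_mem_W_of_isPath_cut (hl : (DW.cut DE eW eE).IsPath l)
    (hnew : ¬ covers l (eW.1, eE.2)) (hv : v ∈ l) (hvW : v ∈ DW.verts) :
    ∀ u ∈ l, u ∈ DW.verts := by
  have hside : l.IsChain fun a b => (a ∈ DW.verts ↔ b ∈ DW.verts) := by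
    refine isChain_iff_covers.2 fun g hg => ?_
    rcases DG.mem_cut_edges.1 (hl.mem_edges hg) with rfl | ⟨hg', -⟩ | ⟨hg', -⟩
    · exact absurd hg hnew
    · exact iff_of_true (hc.orientedW.1 g hg').1 (hc.orientedW.1 g hg').2
    · exact iff_of_false (hc.notMem_W_of_mem_E (hc.orientedE.1 g hg').1)
        (hc.notMem_W_of_mem_E (hc.orientedE.1 g hg').2)
  obtain ⟨x, t, rfl⟩ := exists_cons_of_ne_nil hl.1
  have key := hside.induction (fun u => u ∈ DW.verts ↔ x ∈ DW.verts) _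
    (fun _ _ hab ha => hab.symm.trans ha) (fun _ => Iff.rfl)
  exact fun u hu => (key u hu).2 ((key v hv).1 hvW)

lemma isPath_cut_append (hq : DW.IsPath (q ++ [eW.1, eW.2]))
    (hr : DE.IsPath (eE.1 :: eE.2 :: r)) : (DW.cut DE eW eE).IsPath (q ++ eW.1 :: eE.2 :: r) := by
  have hqW : ∀ v ∈ q ++ [eW.1], v ∈ DW.verts :=
    fun v hv => hq.2.1 v (by simp at hv ⊢; tauto)
  have hrE : ∀ v ∈ eE.2 :: r, v ∈ DE.verts := fun v hv => hr.2.1 v (mem_cons_of_mem _ hv)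
  have hq' := (hc.isPath_cut_iff_W hqW).2 ⟨hq.infix ⟨[], [eW.2], by simp⟩ (by simp),
    ((nodup_concat _ _).1 (by simpa using hq.2.2.1)).1⟩
  have hr' := (hc.isPath_cut_iff_E hrE).2 ⟨hr.infix (suffix_cons _ _).isInfix (by simp),
    hr.2.2.1.notMem⟩
  simpa using hq'.append hr' (fun v hv hv' => hc.notMem_E_of_mem_W (hqW v hv) (hrE v hv'))
    (by simpa using DG.new_mem_cut_edges)

lemma isPath_cut_cases (hl : (DW.cut DE eW eE).IsPath l) :
    (DW.IsPath l ∧ eW.2 ∉ l) ∨ (DE.IsPath l ∧ eE.1 ∉ l) ∨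
      ∃ q r, l = q ++ eW.1 :: eE.2 :: r ∧ DW.IsPath (q ++ [eW.1, eW.2]) ∧
        DE.IsPath (eE.1 :: eE.2 :: r) := by
  obtain ⟨x, t, rfl⟩ := exists_cons_of_ne_nil hl.1
  rcases (DG.mem_cut_verts.1 (hl.2.1 x mem_cons_self)).1 with hxW | hxE
  swap
  · exact Or.inr (Or.inl ((hc.isPath_cut_iff_E (hc.forall_mem_E_of_isPath_cut hl hxE)).1 hl))
  by_cases hnew : covers (x :: t) (eW.1, eE.2)
  swap
  · exact Or.inl ((hc.isPath_cut_iff_W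
      (hc.forall_mem_W_of_isPath_cut hl hnew mem_cons_self hxW)).1 hl)
  obtain ⟨q, r, hqr⟩ := covers_iff_exists_append.1 hnew
  dsimp only at hqr
  rw [hqr] at hl
  refine Or.inr (Or.inr ⟨q, r, hqr, ?_, ?_⟩)
  · have hq := hl.infix ⟨[], eE.2 :: r, by simp⟩ (by simp : q ++ [eW.1] ≠ [])
    have hnew' : ¬ covers (q ++ [eW.1]) (eW.1, eE.2) := fun h =>
      disjoint_of_nodup_append (by simpa using hl.2.2.1) h.mem.2 mem_cons_self
    obtain ⟨hqW, hb⟩ := (hc.isPath_cut_iff_W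
      (hc.forall_mem_W_of_isPath_cut hq hnew' (by simp) hc.fst_eW_mem)).1 hq
    exact hqW.append_singleton hc.snd_eW_mem hb hc.funcEEdge_eW.1.1
  · have hr := hl.infix ⟨q ++ [eW.1], [], by simp⟩ (by simp : eE.2 :: r ≠ [])
    obtain ⟨hrE, hc'⟩ := (hc.isPath_cut_iff_E
      (hc.forall_mem_E_of_isPath_cut hr hc.snd_eE_mem)).1 hr
    exact hrE.cons_of_mem_edges hc.fst_eE_mem hc' hc.funcWEdge_eE.1.1

lemma covers_of_covers_append_eW (hg : g ∈ DW.edges) (hne : g ≠ eW)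
    (h : covers (q ++ [eW.1, eW.2]) g) : covers (q ++ [eW.1]) g :=
  (show covers ((q ++ [eW.1]) ++ [eW.2]) g by simpa using h).of_append_left
    (by simpa using hc.snd_ne_of_mem_W hg hne)

lemma covers_of_covers_eE_cons (hg : g ∈ DE.edges) (hne : g ≠ eE)
    (h : covers (eE.1 :: eE.2 :: r) g) : covers (eE.2 :: r) g :=
  (show covers ([eE.1] ++ eE.2 :: r) g from h).of_append_right
    (by simpa using hc.fst_ne_of_mem_E hg hne)

end CutSetting

/-! ### Constructions -/

lemma ProperLab.mem_edges {D : DG} {L : Lab} {v : ℕ} (hP : ProperLab D L) (hv : D.isInner v)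
    (Y : YDir) (X : XDir) : L v Y X ∈ D.edges := by
  cases X
  exacts [(hP v hv Y).1, (hP v hv Y).2.2.1]

section LamNode

variable {D : DG} {ε : DistE} {eW eE : ℕ × ℕ} {GW GE : CTree} {v : ℕ}
  (hc : CutSetting GW.rootGraph GE.rootGraph eW eE)

include hc

lemma lamG_node_of_isInner_W (hPW : ProperLab GW.rootGraph (lamG GW))
    (hv : GW.rootGraph.isInner v) (Y : YDir) (X : XDir) :
    lamG (.node D ε eW eE GW GE) v Y X =
      if lamG GW v Y X = eW then (eW.1, eE.2) else lamG GW v Y X := by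
  have hne : lamG GW v Y X ≠ eE := fun h => hc.notMem_W_of_mem_E hc.fst_eE_mem
    (h ▸ (hc.orientedW.1 _ (hPW.mem_edges hv Y X)).1)
  simp [lamG, hv.1, hne]

lemma lamG_node_of_isInner_E (hPE : ProperLab GE.rootGraph (lamG GE))
    (hv : GE.rootGraph.isInner v) (Y : YDir) (X : XDir) :
    lamG (.node D ε eW eE GW GE) v Y X =
      if lamG GE v Y X = eE then (eW.1, eE.2) else lamG GE v Y X := by
  have hne : lamG GE v Y X ≠ eW := fun h => hc.notMem_E_of_mem_W hc.snd_eW_mem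
    (h ▸ (hc.orientedE.1 _ (hPE.mem_edges hv Y X)).2)
  simp [lamG, hc.notMem_W_of_mem_E hv.1, hne]

end LamNode

namespace IsConstruction

variable {G : CTree} {g : ℕ × ℕ}

lemma isOriented (hG : IsConstruction G) : G.rootGraph.IsOriented := by
  induction hG with
  | leaf D ε h => exact h.1
  | node D ε eW eE GW GE hW hE hdisj heW heE hD hXYC hεW hεE ihW ihE =>
    subst hD
    exact CutSetting.isOriented_cut ⟨ihW, ihE, hdisj, heW, heE⟩

lemma not_isEEdge_of_isWEdge (hG : IsConstruction G) (hg : G.rootGraph.isWEdge g) :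
    ¬ G.rootGraph.isEEdge g := by
  induction hG generalizing g with
  | leaf D ε h =>
    obtain ⟨-, b, -, hstar, -, ⟨a, hab⟩, ⟨c, hbc⟩, -⟩ := h
    intro hE
    rcases hstar g hg.1 with h | h
    · exact hg.2.2 a (h ▸ hab)
    · exact hE.2.2 c (h ▸ hbc)
  | node D ε eW eE GW GE hW hE hdisj heW heE hD hXYC hεW hεE ihW ihE =>
    subst hD
    have hc : CutSetting GW.rootGraph GE.rootGraph eW eE :=
      ⟨hW.isOriented, hE.isOriented, hdisj, heW, heE⟩
    intro hE
    rcases DG.mem_cut_edges.1 hg.1 with rfl | ⟨hg', hne⟩ | ⟨hg', hne⟩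
    · exact ihW ⟨heW.1.1, (hc.isWVert_cut_iff_W hc.fst_eW_mem hc.fst_ne_snd_eW).1 hg.2⟩ heW.1
    · exact ihW ((hc.isWEdge_cut_iff_W hg' hne).1 hg) ((hc.isEEdge_cut_iff_W hg' hne).1 hE)
    · exact ihE ((hc.isWEdge_cut_iff_E hg' hne).1 hg) ((hc.isEEdge_cut_iff_E hg' hne).1 hE)

lemma properLab (hG : IsConstruction G) : ProperLab G.rootGraph (lamG G) := by
  induction hG with
  | leaf D ε h =>
    obtain ⟨ho, b, -, hstar, -, -, -, hdist, -⟩ := h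
    rintro v ⟨-, ⟨u, hu⟩, ⟨w, hw⟩⟩ Y
    obtain rfl : v = b := by
      by_contra hvb
      have hu' := (hstar _ hu).resolve_right hvb
      have hw' := (hstar _ hw).resolve_left hvb
      exact ho.2.2.1 v b (hw' ▸ hw) (hu' ▸ hu)
    exact hdist Y
  | node D ε eW eE GW GE hW hE hdisj heW heE hD hXYC hεW hεE ihW ihE =>
    subst hD
    have hc : CutSetting GW.rootGraph GE.rootGraph eW eE :=
      ⟨hW.isOriented, hE.isOriented, hdisj, heW, heE⟩
    intro v hv Y
    obtain ⟨hvW | hvE, hb, hc'⟩ := DG.mem_cut_verts.1 hv.1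
    · have hv' := (hc.isInner_cut_iff_W hvW hb).1 hv
      obtain ⟨hWmem, hWend, hEmem, hEstart⟩ := ihW v hv' Y
      have hne : lamG GW v Y .W ≠ eW := fun h => hb (hWend ▸ h ▸ rfl)
      simp only [lamG_node_of_isInner_W hc ihW hv', if_neg hne]
      refine ⟨DG.mem_cut_edges_of_mem_W hWmem hne, hWend, ?_⟩
      split_ifs with h
      · exact ⟨DG.new_mem_cut_edges, by rw [← hEstart, h]⟩
      · exact ⟨DG.mem_cut_edges_of_mem_W hEmem h, hEstart⟩
    · have hv' := (hc.isInner_cut_iff_E hvE hc').1 hv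
      obtain ⟨hWmem, hWend, hEmem, hEstart⟩ := ihE v hv' Y
      have hne : lamG GE v Y .E ≠ eE := fun h => hc' (hEstart ▸ h ▸ rfl)
      simp only [lamG_node_of_isInner_E hc ihE hv', if_neg hne]
      have hEcut : lamG GE v Y .E ∈ (GW.rootGraph.cut GE.rootGraph eW eE).edges :=
        DG.mem_cut_edges_of_mem_E hEmem hne
      split_ifs with h
      · exact ⟨DG.new_mem_cut_edges, by rw [← hWend, h], hEcut, hEstart⟩
      · exact ⟨DG.mem_cut_edges_of_mem_E hWmem h, hWend, hEcut, hEstart⟩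

lemma isWEdge_dist (hG : IsConstruction G) (Y : YDir) : G.rootGraph.isWEdge (G.dist Y .W) := by
  induction hG with
  | leaf D ε h =>
    obtain ⟨ho, b, -, hstar, -, -, -, hdist, -⟩ := h
    exact ho.isWEdge_of_snd_eq hstar (hdist Y).1 (hdist Y).2.1
  | node D ε eW eE GW GE hW hE hdisj heW heE hD hXYC hεW hεE ihW ihE =>
    subst hD
    have hc : CutSetting GW.rootGraph GE.rootGraph eW eE :=
      ⟨hW.isOriented, hE.isOriented, hdisj, heW, heE⟩
    show (GW.rootGraph.cut GE.rootGraph eW eE).isWEdge (ε Y .W)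
    rw [hεW Y]
    split_ifs with hcE
    · have hne : GW.dist Y .W ≠ eW := fun h => hW.not_isEEdge_of_isWEdge ihW (h ▸ heW.1)
      exact (hc.isWEdge_cut_iff_W ihW.1 hne).2 ihW
    · exact (hc.isWEdge_cut_iff_E ihE.1 (Ne.symm hcE)).2 ihE

end IsConstruction

/-! ### Reversal -/

def CTree.reverse : CTree → CTree
  | .leaf D ε => .leaf D.reverse fun Y X => (ε Y X.other).swap
  | .node D ε eW eE l r =>
      .node D.reverse (fun Y X => (ε Y X.other).swap) eE.swap eW.swap r.reverse l.reverse

@[simp] lemma CTree.rootGraph_reverse (G : CTree) : G.reverse.rootGraph = G.rootGraph.reverse := by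
  cases G <;> rfl

@[simp] lemma CTree.dist_reverse (G : CTree) (Y : YDir) (X : XDir) :
    G.reverse.dist Y X = (G.dist Y X.other).swap := by
  cases G <;> rfl

lemma IsBasicK.reverse {D : DG} {ε : DistE} (h : IsBasicK D ε) :
    IsBasicK D.reverse fun Y X => (ε Y X.other).swap := by
  obtain ⟨ho, b, hb, hstar, hjoin, ⟨a, hab⟩, ⟨c, hbc⟩, hdist, hNW, hNE⟩ := h
  have hcard : ∀ p : ℕ × ℕ → Prop, [DecidablePred p] →
      (D.reverse.edges.filter p).card = (D.edges.filter fun e => p e.swap).card := by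
    intro p _
    simp only [DG.reverse, Finset.filter_map, Function.Embedding.coeFn_mk, Equiv.coe_prodComm,
      Function.comp_apply, Finset.card_map]
    rfl
  refine ⟨ho.reverse, b, hb, fun e he => (hstar _ (DG.mem_reverse_edges.1 he)).symm,
    fun v hv => ?_, ⟨c, by simpa using hbc⟩, ⟨a, by simpa using hab⟩,
    fun Y => ⟨by simpa [XDir.other] using (hdist Y).2.2.1, (hdist Y).2.2.2,
      by simpa [XDir.other] using (hdist Y).1,
      (hdist Y).2.1⟩, fun h2 => ?_, fun h2 => ?_⟩
  · have := hjoin v hv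
    simp only [DG.mem_reverse_edges, Prod.swap_prod_mk]
    tauto
  · rw [hcard] at h2
    simpa [XDir.other] using hNE h2
  · rw [hcard] at h2
    simpa [XDir.other] using hNW h2

namespace IsConstruction

variable {G : CTree}

lemma reverse (hG : IsConstruction G) : IsConstruction G.reverse := by
  induction hG with
  | leaf D ε h => exact .leaf _ _ h.reverse
  | node D ε eW eE GW GE hW hE hdisj heW heE hD hXYC hεW hεE ihW ihE =>
    refine .node _ _ _ _ _ _ ihE ihW (by simpa using hdisj.symm) (by simpa using heE)
      (by simpa using heW) (by simp [hD, DG.cut_reverse]) (fun Y => ?_) (fun Y => ?_) (fun Y => ?_)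
    · simpa [XDir.other, or_comm] using hXYC Y
    · simp [XDir.other, hεE Y, apply_ite Prod.swap]
    · simp [XDir.other, hεW Y, apply_ite Prod.swap]

lemma lamG_reverse (hG : IsConstruction G) {a : ℕ} (ha : a ∈ G.rootGraph.verts) (Y : YDir)
    (X : XDir) : lamG G.reverse a Y X = (lamG G a Y X.other).swap := by
  induction hG generalizing a with
  | leaf D ε h => rfl
  | node D ε eW eE GW GE hW hE hdisj heW heE hD hXYC hεW hεE ihW ihE =>
    subst hD
    have hc : CutSetting GW.rootGraph GE.rootGraph eW eE :=
      ⟨hW.isOriented, hE.isOriented, hdisj, heW, heE⟩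
    rcases (DG.mem_cut_verts.1 ha).1 with haW | haE
    · simp [CTree.reverse, lamG, haW, hc.notMem_E_of_mem_W haW, ihW haW, or_comm,
        apply_ite Prod.swap]
    · simp [CTree.reverse, lamG, haE, hc.notMem_W_of_mem_E haE, ihE haE, or_comm,
        apply_ite Prod.swap]

lemma isEEdge_dist (hG : IsConstruction G) (Y : YDir) : G.rootGraph.isEEdge (G.dist Y .E) := by
  simpa [XDir.other] using hG.reverse.isWEdge_dist Y

lemma yxedge_reverse (hG : IsConstruction G) (Y : YDir) (g : ℕ × ℕ) :
    YXedge G.reverse.rootGraph (lamG G.reverse) Y .W g ↔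
      YXedge G.rootGraph (lamG G) Y .E g.swap := by
  simp only [YXedge, CTree.rootGraph_reverse, DG.mem_reverse_edges, DG.isEEdge_reverse]
  refine and_congr_right fun hg => ?_
  have hv : g.2 ∈ G.rootGraph.verts := (hG.isOriented.1 _ hg).1
  rw [hG.lamG_reverse hv]
  simp [XDir.other, Prod.swap_eq_iff_eq_swap]

lemma isYXPath_reverse (hG : IsConstruction G) (Y : YDir) (l : List ℕ) :
    IsYXPath G.reverse.rootGraph (lamG G.reverse) Y .W l.reverse ↔
      IsYXPath G.rootGraph (lamG G) Y .E l := by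
  rw [isYXPath_iff_isChain, isYXPath_iff_isChain, isChain_reverse]
  exact IsChain.iff fun a b => hG.yxedge_reverse Y (b, a)

lemma coveringPathsAreYX_reverse (hG : IsConstruction G) (Y : YDir) (h : ℕ × ℕ) :
    CoveringPathsAreYX G.reverse.rootGraph (lamG G.reverse) Y .W h.swap ↔
      CoveringPathsAreYX G.rootGraph (lamG G) Y .E h := by
  constructor
  · intro H l hl hlh
    rw [← hG.isYXPath_reverse]
    exact H _ (by simpa [DG.isPath_reverse] using hl) (covers_reverse_iff.2 hlh)
  · intro H l hl hlh
    rw [CTree.rootGraph_reverse, DG.isPath_reverse] at hl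
    simpa using (hG.isYXPath_reverse Y l.reverse).2
      (H _ hl (by simpa using covers_reverse_iff.2 hlh))

end IsConstruction

/-! ### A path through `YW(G)` and `YE(G)` -/

lemma IsBasicK.exists_isPath_covers {D : DG} {ε : DistE} (hB : IsBasicK D ε) (Y : YDir) :
    ∃ l, D.IsPath l ∧ covers l (ε Y .W) ∧ covers l (ε Y .E) := by
  obtain ⟨ho, b, -, -, -, -, -, hdist, -⟩ := hB
  obtain ⟨hW, hWb, hE, hEb⟩ := hdist Y
  rw [show ε Y .W = ((ε Y .W).1, b) from Prod.ext rfl hWb] at hW ⊢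
  rw [show ε Y .E = (b, (ε Y .E).2) from Prod.ext hEb rfl] at hE ⊢
  have hz : (ε Y .E).2 ∉ [(ε Y .W).1] ++ [b] := by
    simp only [singleton_append, mem_cons, not_mem_nil, or_false, not_or]
    exact ⟨fun h => ho.2.2.1 _ _ hW (h ▸ hE), (ho.2.1 _ hE).symm⟩
  exact ⟨_, (ho.isPath_pair hW).append_singleton (ho.1 _ hE).2 hz hE,
    covers_cons_cons.2 (Or.inl rfl),
    covers_cons_cons.2 (Or.inr (covers_cons_cons.2 (Or.inl rfl)))⟩

lemma CutSetting.exists_isPath_covers_node {eW eE : ℕ × ℕ} {GW GE : CTree} {Y : YDir}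
    (hc : CutSetting GW.rootGraph GE.rootGraph eW eE) (hW : IsConstruction GW)
    (hE : IsConstruction GE)
    (hXYC : eW = GW.dist Y .E ∨ eE = GE.dist Y .W)
    (ihW : ∃ l, GW.rootGraph.IsPath l ∧ covers l (GW.dist Y .W) ∧ covers l (GW.dist Y .E))
    (ihE : ∃ l, GE.rootGraph.IsPath l ∧ covers l (GE.dist Y .W) ∧ covers l (GE.dist Y .E)) :
    ∃ l, (GW.rootGraph.cut GE.rootGraph eW eE).IsPath l ∧
      covers l (if eE = GE.dist Y .W then GW.dist Y .W else GE.dist Y .W) ∧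
      covers l (if eW = GW.dist Y .E then GE.dist Y .E else GW.dist Y .E) := by
  obtain ⟨pW, hpW, hpWW, hpWE⟩ := ihW
  obtain ⟨pE, hpE, hpEW, hpEE⟩ := ihE
  have heW := hc.funcEEdge_eW
  have heE := hc.funcWEdge_eE
  by_cases hcE : eE = GE.dist Y .W
  · by_cases hcW : eW = GW.dist Y .E
    · simp only [if_pos hcE, if_pos hcW]
      rw [← hcW] at hpWE
      rw [← hcE] at hpEW
      obtain ⟨q, rfl⟩ := hpW.eq_append_of_funcEEdge heW hpWE.mem.2 hpWE
      obtain ⟨r, rfl⟩ := hpE.eq_cons_of_funcWEdge heE hpEW.mem.1 hpEW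
      have hWW := hW.isWEdge_dist Y
      have hEE := hE.isEEdge_dist Y
      have hqW := hc.covers_of_covers_append_eW hWW.1
        (fun h => hW.not_isEEdge_of_isWEdge hWW (h ▸ heW.1)) hpWW
      have hrE := hc.covers_of_covers_eE_cons hEE.1
        (fun h => hE.not_isEEdge_of_isWEdge (h ▸ heE.1) hEE) hpEE
      refine ⟨_, hc.isPath_cut_append hpW hpE, ?_, ?_⟩
      · simpa using hqW.append_left (l₂ := eE.2 :: r)
      · simpa using hrE.append_right (l₁ := q ++ [eW.1])
    · simp only [if_pos hcE, if_neg hcW]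
      have hb : eW.2 ∉ pW := fun hb => hcW (heW.eq_of_snd_eq (hW.isEEdge_dist Y).1
        (hpW.eq_of_isEVert hpWE.mem.2 hb (hW.isEEdge_dist Y).2 heW.1.2)).symm
      exact ⟨pW, (hc.isPath_cut_iff_W hpW.2.1).2 ⟨hpW, hb⟩, hpWW, hpWE⟩
  · simp only [if_neg hcE, if_pos (hXYC.resolve_right hcE)]
    have hc' : eE.1 ∉ pE := fun hc' => hcE (heE.eq_of_fst_eq (hE.isWEdge_dist Y).1
      (hpE.eq_of_isWVert hpEW.mem.1 hc' (hE.isWEdge_dist Y).2 heE.1.2)).symm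
    exact ⟨pE, (hc.isPath_cut_iff_E hpE.2.1).2 ⟨hpE, hc'⟩, hpEW, hpEE⟩

lemma IsConstruction.exists_isPath_covers_dist {G : CTree} (hG : IsConstruction G) (Y : YDir) :
    ∃ l, G.rootGraph.IsPath l ∧ covers l (G.dist Y .W) ∧ covers l (G.dist Y .E) := by
  induction hG with
  | leaf D ε h => exact h.exists_isPath_covers Y
  | node D ε eW eE GW GE hW hE hdisj heW heE hD hXYC hεW hεE ihW ihE =>
    subst hD
    show ∃ l, _ ∧ covers l (ε Y .W) ∧ covers l (ε Y .E)
    rw [hεW Y, hεE Y]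
    exact CutSetting.exists_isPath_covers_node ⟨hW.isOriented, hE.isOriented, hdisj, heW, heE⟩
      hW hE (hXYC Y) ihW ihE

/-! ### `YW`-paths through a cut -/

namespace CutSetting

variable {D : DG} {ε : DistE} {eW eE g h : ℕ × ℕ} {GW GE : CTree} {Y : YDir}
  {l q r : List ℕ}
  (hc : CutSetting GW.rootGraph GE.rootGraph eW eE)
  (hPW : ProperLab GW.rootGraph (lamG GW)) (hPE : ProperLab GE.rootGraph (lamG GE))

include hc

include hPW in
lemma yxedge_node_iff_W (hg : g ∈ GW.rootGraph.edges) (hne : g ≠ eW) :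
    YXedge (GW.rootGraph.cut GE.rootGraph eW eE) (lamG (.node D ε eW eE GW GE)) Y .W g ↔
      YXedge GW.rootGraph (lamG GW) Y .W g := by
  have hv := (hc.orientedW.1 g hg).2
  have hb := hc.snd_ne_of_mem_W hg hne
  rw [yxedge_W_iff (DG.mem_cut_edges_of_mem_W hg hne) ((hc.mem_cut_verts_iff_W hv).2 hb),
    yxedge_W_iff hg hv, hc.isInner_cut_iff_W hv hb]
  refine imp_congr_right fun hin => ?_
  rw [lamG_node_of_isInner_W hc hPW hin, if_neg]
  exact fun h => hb (by rw [← (hPW _ hin Y).2.1, h])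

include hPE in
lemma yxedge_node_iff_E (hg : g ∈ GE.rootGraph.edges) (hne : g ≠ eE) :
    YXedge (GW.rootGraph.cut GE.rootGraph eW eE) (lamG (.node D ε eW eE GW GE)) Y .W g ↔
      YXedge GE.rootGraph (lamG GE) Y .W g := by
  have hv := hc.orientedE.1 g hg
  have hc' : g.2 ≠ eE.1 := hc.funcWEdge_eE.1.2.snd_ne hg
  rw [yxedge_W_iff (DG.mem_cut_edges_of_mem_E hg hne) ((hc.mem_cut_verts_iff_E hv.2).2 hc'),
    yxedge_W_iff hg hv.2, hc.isInner_cut_iff_E hv.2 hc']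
  refine imp_congr_right fun hin => ?_
  rw [lamG_node_of_isInner_E hc hPE hin]
  split_ifs with h
  · exact iff_of_false (fun h' => hc.notMem_W_of_mem_E hv.1 (h' ▸ hc.fst_eW_mem))
      (fun h' => hne (h'.symm.trans h))
  · rfl

include hPE in
lemma yxedge_node_new_iff :
    YXedge (GW.rootGraph.cut GE.rootGraph eW eE) (lamG (.node D ε eW eE GW GE)) Y .W
        (eW.1, eE.2) ↔ YXedge GE.rootGraph (lamG GE) Y .W eE := by
  have hd := hc.snd_eE_mem
  have hdc : eE.2 ≠ eE.1 := (hc.orientedE.2.1 _ hc.funcWEdge_eE.1.1).symm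
  rw [yxedge_W_iff DG.new_mem_cut_edges ((hc.mem_cut_verts_iff_E hd).2 hdc),
    yxedge_W_iff hc.funcWEdge_eE.1.1 hd]
  dsimp only
  rw [hc.isInner_cut_iff_E hd hdc]
  refine imp_congr_right fun hin => ?_
  rw [lamG_node_of_isInner_E hc hPE hin]
  split_ifs with h
  · exact iff_of_true rfl h
  · refine iff_of_false (fun h' => hc.notMem_W_of_mem_E ?_ hc.fst_eW_mem) h
    have := (hc.orientedE.1 _ (hPE.mem_edges hin Y .W)).1
    rwa [h'] at this

include hPW in
lemma isYXPath_node_iff_W (hl : GW.rootGraph.IsPath l) (hb : eW.2 ∉ l) :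
    IsYXPath (GW.rootGraph.cut GE.rootGraph eW eE) (lamG (.node D ε eW eE GW GE)) Y .W l ↔
      IsYXPath GW.rootGraph (lamG GW) Y .W l :=
  forall_congr' fun _ => imp_congr_right fun hg =>
    hc.yxedge_node_iff_W hPW (hl.mem_edges hg) fun h => hb (h ▸ hg.mem.2)

include hPE in
lemma isYXPath_node_iff_E (hl : GE.rootGraph.IsPath l) (hc' : eE.1 ∉ l) :
    IsYXPath (GW.rootGraph.cut GE.rootGraph eW eE) (lamG (.node D ε eW eE GW GE)) Y .W l ↔
      IsYXPath GE.rootGraph (lamG GE) Y .W l :=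
  forall_congr' fun _ => imp_congr_right fun hg =>
    hc.yxedge_node_iff_E hPE (hl.mem_edges hg) fun h => hc' (h ▸ hg.mem.1)

include hPW hPE in
lemma isYXPath_node_append_iff (hq : GW.rootGraph.IsPath (q ++ [eW.1, eW.2]))
    (hr : GE.rootGraph.IsPath (eE.1 :: eE.2 :: r)) :
    IsYXPath (GW.rootGraph.cut GE.rootGraph eW eE) (lamG (.node D ε eW eE GW GE)) Y .W
        (q ++ eW.1 :: eE.2 :: r) ↔
      IsYXPath GW.rootGraph (lamG GW) Y .W (q ++ [eW.1, eW.2]) ∧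
        IsYXPath GE.rootGraph (lamG GE) Y .W (eE.1 :: eE.2 :: r) := by
  have hW := hc.isYXPath_node_iff_W hPW (D := D) (ε := ε) (Y := Y) (l := q ++ [eW.1])
    (hq.infix ⟨[], [eW.2], by simp⟩ (by simp))
    ((nodup_concat _ _).1 (by simpa using hq.2.2.1)).1
  have hE := hc.isYXPath_node_iff_E hPE (D := D) (ε := ε) (Y := Y)
    (hr.infix ⟨[eE.1], [], by simp⟩ (by simp)) hr.2.2.1.notMem
  have heW : YXedge GW.rootGraph (lamG GW) Y .W eW :=
    ⟨hc.funcEEdge_eW.1.1, Or.inr hc.funcEEdge_eW.1⟩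
  simp only [isYXPath_iff_isChain] at hW hE ⊢
  simp only [isChain_append_cons_cons, isChain_cons_cons, isChain_singleton, and_true, hW, hE,
    hc.yxedge_node_new_iff hPE, Prod.mk.eta, heW]

include hPW hPE in
lemma coveringPathsAreYX_node_of_W (hh : h ∈ GW.rootGraph.edges)
    (hPh : CoveringPathsAreYX GW.rootGraph (lamG GW) Y .W h)
    (hPe : CoveringPathsAreYX GE.rootGraph (lamG GE) Y .W eE) :
    CoveringPathsAreYX (GW.rootGraph.cut GE.rootGraph eW eE) (lamG (.node D ε eW eE GW GE))
      Y .W h := by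
  intro l hl hlh
  have hhW := hc.orientedW.1 h hh
  rcases hc.isPath_cut_cases hl with ⟨hlW, hb⟩ | ⟨hlE, -⟩ | ⟨q, r, rfl, hq, hr⟩
  · exact (hc.isYXPath_node_iff_W hPW hlW hb).2 (hPh l hlW hlh)
  · exact absurd (hlE.2.1 _ hlh.mem.1) (hc.notMem_E_of_mem_W hhW.1)
  · refine (hc.isYXPath_node_append_iff hPW hPE hq hr).2
      ⟨hPh _ hq ?_, hPe _ hr (covers_cons_cons.2 (Or.inl rfl))⟩
    have hqh : covers (q ++ [eW.1]) h :=
      (show covers ((q ++ [eW.1]) ++ eE.2 :: r) h by simpa using hlh).of_append_left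
        fun hm => hc.notMem_E_of_mem_W hhW.2 (hr.2.1 _ (mem_cons_of_mem _ hm))
    simpa using hqh.append_left (l₂ := [eW.2])

include hPE in
lemma coveringPathsAreYX_node_of_E (hh : GE.rootGraph.isWEdge h) (hne : h ≠ eE)
    (hPh : CoveringPathsAreYX GE.rootGraph (lamG GE) Y .W h) :
    CoveringPathsAreYX (GW.rootGraph.cut GE.rootGraph eW eE) (lamG (.node D ε eW eE GW GE))
      Y .W h := by
  intro l hl hlh
  have hWh := ((hc.isWEdge_cut_iff_E hh.1 hne).2 hh).2
  obtain ⟨t, rfl⟩ := hl.eq_cons_of_isWVert hlh.mem.1 hWh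
  obtain ⟨hlE, hc'⟩ := (hc.isPath_cut_iff_E (hc.forall_mem_E_of_isPath_cut hl hh.2.1)).1 hl
  exact (hc.isYXPath_node_iff_E hPE hlE hc').2 (hPh _ hlE hlh)

include hPW hPE in
lemma coveringPathsAreYX_W_of_node (hh : h ∈ GW.rootGraph.edges) (hne : h ≠ eW)
    (hP : CoveringPathsAreYX (GW.rootGraph.cut GE.rootGraph eW eE)
      (lamG (.node D ε eW eE GW GE)) Y .W h) :
    CoveringPathsAreYX GW.rootGraph (lamG GW) Y .W h := by
  intro p hp hph
  by_cases hb : eW.2 ∈ p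
  · obtain ⟨q, rfl⟩ := hp.eq_append_of_funcEEdge hc.funcEEdge_eW hb hph
    have hcd := hc.orientedE.isPath_pair hc.funcWEdge_eE.1.1
    have hcov : covers (q ++ [eW.1, eE.2]) h := by
      simpa using (hc.covers_of_covers_append_eW hh hne hph).append_left (l₂ := [eE.2])
    exact ((hc.isYXPath_node_append_iff hPW hPE hp hcd).1
      (hP _ (hc.isPath_cut_append hp hcd) hcov)).1
  · exact (hc.isYXPath_node_iff_W hPW hp hb).1
      (hP p ((hc.isPath_cut_iff_W hp.2.1).2 ⟨hp, hb⟩) hph)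

include hPE in
lemma coveringPathsAreYX_E_of_node (hh : GE.rootGraph.isWEdge h) (hne : h ≠ eE)
    (hP : CoveringPathsAreYX (GW.rootGraph.cut GE.rootGraph eW eE)
      (lamG (.node D ε eW eE GW GE)) Y .W h) :
    CoveringPathsAreYX GE.rootGraph (lamG GE) Y .W h := by
  intro p hp hph
  have hc' : eE.1 ∉ p := fun hm => hne (hc.funcWEdge_eE.eq_of_fst_eq hh.1
    (hp.eq_of_isWVert hph.mem.1 hm hh.2 hc.funcWEdge_eE.1.2))
  exact (hc.isYXPath_node_iff_E hPE hp hc').1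
    (hP p ((hc.isPath_cut_iff_E hp.2.1).2 ⟨hp, hc'⟩) hph)

include hPW hPE in
lemma coveringPathsAreYX_eE_of_node (hh : h ∈ GW.rootGraph.edges) (hne : h ≠ eW)
    {p : List ℕ} (hp : GW.rootGraph.IsPath p) (hph : covers p h) (hpe : covers p eW)
    (hP : CoveringPathsAreYX (GW.rootGraph.cut GE.rootGraph eW eE)
      (lamG (.node D ε eW eE GW GE)) Y .W h) :
    CoveringPathsAreYX GE.rootGraph (lamG GE) Y .W eE := by
  intro m hm hme
  obtain ⟨q, rfl⟩ := hp.eq_append_of_funcEEdge hc.funcEEdge_eW hpe.mem.2 hpe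
  obtain ⟨r, rfl⟩ := hm.eq_cons_of_funcWEdge hc.funcWEdge_eE hme.mem.1 hme
  have hcov : covers (q ++ eW.1 :: eE.2 :: r) h := by
    simpa using (hc.covers_of_covers_append_eW hh hne hph).append_left (l₂ := eE.2 :: r)
  exact ((hc.isYXPath_node_append_iff hPW hPE hp hm).1
    (hP _ (hc.isPath_cut_append hp hm) hcov)).2

lemma isWEdge_cut_cases (ha : ¬ GW.rootGraph.isWVert eW.1)
    (hh : (GW.rootGraph.cut GE.rootGraph eW eE).isWEdge h) :
    (GW.rootGraph.isWEdge h ∧ h ≠ eW) ∨ (GE.rootGraph.isWEdge h ∧ h ≠ eE) := by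
  rcases DG.mem_cut_edges.1 hh.1 with rfl | ⟨hh', hne⟩ | ⟨hh', hne⟩
  · exact absurd ((hc.isWVert_cut_iff_W hc.fst_eW_mem hc.fst_ne_snd_eW).1 hh.2) ha
  · exact Or.inl ⟨(hc.isWEdge_cut_iff_W hh' hne).1 hh, hne⟩
  · exact Or.inr ⟨(hc.isWEdge_cut_iff_E hh' hne).1 hh, hne⟩

end CutSetting

/-! ### The characterisation of `YX(G)` -/

lemma IsBasicK.eq_W_iff {D : DG} {ε : DistE} (hB : IsBasicK D ε) (Y : YDir) (h : ℕ × ℕ) :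
    h = ε Y .W ↔ D.isWEdge h ∧ CoveringPathsAreYX D (fun _ => ε) Y .W h := by
  obtain ⟨ho, b, -, hstar, -, ⟨a, hab⟩, ⟨c, hbc⟩, hdist, -⟩ := hB
  obtain ⟨hW, hWb, -⟩ := hdist Y
  constructor
  · rintro rfl
    refine ⟨ho.isWEdge_of_snd_eq hstar hW hWb, fun l hl hlh g hlg => ⟨hl.mem_edges hlg, ?_⟩⟩
    rcases hstar g (hl.mem_edges hlg) with hg | hg
    · exact Or.inr (ho.isEEdge_of_fst_eq hstar (hl.mem_edges hlg) hg)
    · exact Or.inl (hlh.eq_of_snd_eq hlg hl.2.2.1 (hWb.trans hg.symm))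
  · rintro ⟨hh, hP⟩
    have hhb : h.2 = b := (hstar h hh.1).resolve_left fun h1 => hh.2.2 a (h1 ▸ hab)
    rcases (hP _ (ho.isPath_pair hh.1) (covers_cons_cons.2 (Or.inl rfl)) h
      (covers_cons_cons.2 (Or.inl rfl))).2 with hε | hE
    · exact hε.symm
    · exact absurd (hhb ▸ hbc) (hE.2.2 c)

lemma CutSetting.eq_dist_W_iff_node {D : DG} {ε : DistE} {eW eE : ℕ × ℕ} {GW GE : CTree}
    (hW : IsConstruction GW) (hE : IsConstruction GE)
    (hc : CutSetting GW.rootGraph GE.rootGraph eW eE) {Y : YDir}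
    (hXYC : eW = GW.dist Y .E ∨ eE = GE.dist Y .W)
    (ihW : ∀ h, h = GW.dist Y .W ↔
      GW.rootGraph.isWEdge h ∧ CoveringPathsAreYX GW.rootGraph (lamG GW) Y .W h)
    (ihE : ∀ h, h = GE.dist Y .W ↔
      GE.rootGraph.isWEdge h ∧ CoveringPathsAreYX GE.rootGraph (lamG GE) Y .W h)
    (h : ℕ × ℕ) :
    h = (if eE = GE.dist Y .W then GW.dist Y .W else GE.dist Y .W) ↔
      (GW.rootGraph.cut GE.rootGraph eW eE).isWEdge h ∧
        CoveringPathsAreYX (GW.rootGraph.cut GE.rootGraph eW eE)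
          (lamG (.node D ε eW eE GW GE)) Y .W h := by
  have hPW := hW.properLab
  have hPE := hE.properLab
  constructor
  · split_ifs with hcE
    · rintro rfl
      obtain ⟨hWh, hPh⟩ := (ihW _).1 rfl
      have hne : GW.dist Y .W ≠ eW :=
        fun he => hW.not_isEEdge_of_isWEdge hWh (he ▸ hc.funcEEdge_eW.1)
      exact ⟨(hc.isWEdge_cut_iff_W hWh.1 hne).2 hWh,
        hc.coveringPathsAreYX_node_of_W hPW hPE hWh.1 hPh ((ihE eE).1 hcE).2⟩
    · rintro rfl
      obtain ⟨hEh, hPh⟩ := (ihE _).1 rfl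
      exact ⟨(hc.isWEdge_cut_iff_E hEh.1 (Ne.symm hcE)).2 hEh,
        hc.coveringPathsAreYX_node_of_E hPE hEh (Ne.symm hcE) hPh⟩
  · rintro ⟨hh, hP⟩
    have ha : ¬ GW.rootGraph.isWVert eW.1 :=
      fun ha => hW.not_isEEdge_of_isWEdge ⟨hc.funcEEdge_eW.1.1, ha⟩ hc.funcEEdge_eW.1
    rcases hc.isWEdge_cut_cases ha hh with ⟨hWh, hne⟩ | ⟨hEh, hne⟩
    · have hhW := (ihW h).2 ⟨hWh, hc.coveringPathsAreYX_W_of_node hPW hPE hWh.1 hne hP⟩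
      split_ifs with hcE
      · exact hhW
      · -- (XYC): `eW = YE(G_W)`, so some path of `D_W` covers both `h = YW(G_W)` and `eW`.
        obtain ⟨p, hp, hph, hpe⟩ := hW.exists_isPath_covers_dist Y
        rw [← hhW] at hph
        rw [← hXYC.resolve_right hcE] at hpe
        exact absurd ((ihE eE).2 ⟨hc.funcWEdge_eE.1,
          hc.coveringPathsAreYX_eE_of_node hPW hPE hWh.1 hne hp hph hpe hP⟩) hcE
    · have hhE := (ihE h).2 ⟨hEh, hc.coveringPathsAreYX_E_of_node hPE hEh hne hP⟩
      split_ifs with hcE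
      · exact absurd (hhE.trans hcE.symm) hne
      · exact hhE

lemma IsConstruction.eq_dist_W_iff {G : CTree} (hG : IsConstruction G) (Y : YDir) (h : ℕ × ℕ) :
    h = G.dist Y .W ↔
      G.rootGraph.isWEdge h ∧ CoveringPathsAreYX G.rootGraph (lamG G) Y .W h := by
  induction hG generalizing h with
  | leaf D ε hB => exact hB.eq_W_iff Y h
  | node D ε eW eE GW GE hW hE hdisj heW heE hD hXYC hεW hεE ihW ihE =>
    subst hD
    rw [show (CTree.node _ ε eW eE GW GE).dist Y .W = ε Y .W from rfl, hεW Y]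
    exact CutSetting.eq_dist_W_iff_node hW hE ⟨hW.isOriented, hE.isOriented, hdisj, heW, heE⟩
      (hXYC Y) ihW ihE h

lemma IsConstruction.eq_dist_E_iff {G : CTree} (hG : IsConstruction G) (Y : YDir) (h : ℕ × ℕ) :
    h = G.dist Y .E ↔
      G.rootGraph.isEEdge h ∧ CoveringPathsAreYX G.rootGraph (lamG G) Y .E h := by
  have := hG.reverse.eq_dist_W_iff Y h.swap
  rw [hG.coveringPathsAreYX_reverse] at this
  simpa [XDir.other, Prod.swap_inj] using this

theorem prop_4_2_general (G : CTree) (hG : IsConstruction G) (X : XDir) (Y : YDir)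
    (h : ℕ × ℕ) :
    h = G.dist Y X ↔
      (G.rootGraph.isXEdge X h ∧
        ∀ l, G.rootGraph.IsPath l → covers l h →
          ∀ g, covers l g → YXedge G.rootGraph (lamG G) Y X g) := by
  cases X
  exacts [hG.eq_dist_W_iff Y h, hG.eq_dist_E_iff Y h]

/-- Proposition 4.2: `h = YX(G)` iff `h` is an `X`-edge of the root graph `D`
of `G` such that every path of `D` that covers `h` is a `YX`-path in
`λ(G)`. -/
theorem prop_4_2 (G : CTree) (hG : IsConstruction G) (X : XDir) (Y : YDir)
    (h : ℕ × ℕ) (hh : h ∈ G.rootGraph.edges) :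
    h = G.dist Y X ↔
      (G.rootGraph.isXEdge X h ∧
        ∀ l, G.rootGraph.IsPath l → covers l h →
          ∀ g, covers l g → YXedge G.rootGraph (lamG G) Y X g) :=
  prop_4_2_general G hG X Y h

end PluralCuts
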